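/- arXiv:2603.05736 — 3 statements merged into one kernel-verified Lean document; each statement's English description precedes it below -/
import Mathlib

section
/- HOP(2^⟨3⟩, 6, 6) has a solution; that is, for n = 9, s = 3 and (m_1, m_2) = (3, 3), there is a family of γ = 24 I-alternating (K_2^⟨3⟩, C_6, C_6)-factors of K_18 such that every non-I edge of K_18 lies in exactly one factor. (In the paper this is stated as: 4K_9^• admits an HOP (C_3, C_3)-decomposition, which by the paper's Theorem 3.2 is equivalent to the stated HOP solution.) -/
abbrev HOPVertex (n : ℕ) : Type := Fin n × Fin 2

/-- The spouse of a participant: the other member of the same couple. -/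
def HOPspouse {n : ℕ} (v : HOPVertex n) : HOPVertex n := (v.1, v.2 + 1)

/-- An edge of `K_{2n}` is an `I`-edge (an edge of the distinguished perfect matching `I`)
if it joins a participant to their spouse. -/
def IsIEdge {n : ℕ} (e : Sym2 (HOPVertex n)) : Prop :=
  ∃ v, e = s(v, HOPspouse v)

/-- An `I`-alternating `(K_2^⟨s⟩, C_{2m_1}, …, C_{2m_t})`-factor of `K_{2n}`:
a spanning subgraph of `K_{2n}` which is a vertex-disjoint union of `s` edges of `I`
(one for each `a : Fin s`, namely the edge joining `pair a` to its spouse) together with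
`t` cycles, the `i`-th of which has length `2 * m i` (given by the cyclic vertex sequence
`cyc i : ZMod (2 * m i) → HOPVertex n`), such that along each cycle the edges alternate
between `I`-edges (at even positions) and non-`I`-edges (at odd positions).
The field `spanning` says that the listed vertices are pairwise distinct and exhaust the
whole vertex set; in particular each `cyc i` is injective, so it really traces a cycle. -/
structure HOPFactor (n s t : ℕ) (m : Fin t → ℕ) : Type where
  pair : Fin s → HOPVertex n
  cyc : (i : Fin t) → ZMod (2 * m i) → HOPVertex n
  alt_even : ∀ (i : Fin t) (j : ZMod (2 * m i)),
      j.val % 2 = 0 → cyc i (j + 1) = HOPspouse (cyc i j)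
  alt_odd : ∀ (i : Fin t) (j : ZMod (2 * m i)),
      j.val % 2 = 1 → ¬ IsIEdge s(cyc i j, cyc i (j + 1))
  spanning : Function.Bijective
      (Sum.elim
        (fun a : Fin s × Fin 2 => if a.2 = 0 then pair a.1 else HOPspouse (pair a.1))
        (fun x : (i : Fin t) × ZMod (2 * m i) => cyc x.1 x.2))

/-- The edge set of an `I`-alternating `(K_2^⟨s⟩, C_{2m_1}, …, C_{2m_t})`-factor. -/
def HOPFactor.edges {n s t : ℕ} {m : Fin t → ℕ} (F : HOPFactor n s t m) :
    Set (Sym2 (HOPVertex n)) :=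
  {e | (∃ a : Fin s, e = s(F.pair a, HOPspouse (F.pair a))) ∨
    ∃ (i : Fin t) (j : ZMod (2 * m i)), e = s(F.cyc i j, F.cyc i (j + 1))}

/-- A solution to the generalized Honeymoon Oberwolfach Problem
`HOP(2^⟨s⟩, 2 m_1, …, 2 m_t)`: a family of `γ` `I`-alternating
`(K_2^⟨s⟩, C_{2m_1}, …, C_{2m_t})`-factors of `K_{2n}`, where `γ` is the natural number
with `γ * (m_1 + ⋯ + m_t) = 2n(n-1)`, such that every edge of `K_{2n}` that is not an
`I`-edge lies in exactly one factor of the family. -/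
def HOPSolution (n s t : ℕ) (m : Fin t → ℕ) : Prop :=
  ∃ γ : ℕ, γ * (∑ i, m i) = 2 * n * (n - 1) ∧
    ∃ F : Fin γ → HOPFactor n s t m,
      ∀ e : Sym2 (HOPVertex n), ¬ e.IsDiag → ¬ IsIEdge e →
        ∃! k : Fin γ, e ∈ (F k).edges

/-!
Each meal is described at the level of couples: three couples sit at the tables of size 2, and
the other six around two tables of three couples, every couple side by side. Such a seating is
an `I`-alternating factor whose non-`I` edges are the "cross edges" joining consecutive couples
at a table. The 24 meals give `24 * 6 = 144` cross edges, exactly the number `2 * 9 * 8` of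
non-`I` edges of `K_18`, so it suffices to check that the cross edges are pairwise distinct.
-/

lemma eq_or_eq_HOPspouse_of_fst_eq {n : ℕ} {u v : HOPVertex n} (h : u.1 = v.1) :
    v = u ∨ v = HOPspouse u := by
  obtain ⟨a, b⟩ := u
  obtain ⟨a', b'⟩ := v
  simp only at h
  subst h
  fin_cases b <;> fin_cases b' <;> simp [HOPspouse]

lemma fst_eq_of_isIEdge {n : ℕ} {u v : HOPVertex n} (h : IsIEdge s(u, v)) : u.1 = v.1 := by
  obtain ⟨w, hw⟩ := h
  rcases Sym2.eq_iff.1 hw with ⟨rfl, rfl⟩ | ⟨rfl, rfl⟩ <;> rfl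

lemma isIEdge_iff {n : ℕ} {e : Sym2 (HOPVertex n)} :
    IsIEdge e ↔ ∃ a : Fin n, e = s((a, 0), (a, 1)) := by
  constructor
  · rintro ⟨⟨a, b⟩, rfl⟩
    refine ⟨a, ?_⟩
    fin_cases b
    · rfl
    · exact Sym2.eq_swap
  · rintro ⟨a, rfl⟩
    exact ⟨(a, 0), rfl⟩

lemma card_isIEdge (n : ℕ) : Nat.card {e : Sym2 (HOPVertex n) // IsIEdge e} = n := by
  have hbij : Function.Bijective fun a : Fin n =>
      (⟨s((a, 0), (a, 1)), isIEdge_iff.2 ⟨a, rfl⟩⟩ :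
        {e : Sym2 (HOPVertex n) // IsIEdge e}) := by
    refine ⟨fun a b hab => ?_, fun ⟨e, he⟩ => ?_⟩
    · simpa using congrArg Subtype.val hab
    · obtain ⟨a, rfl⟩ := isIEdge_iff.1 he
      exact ⟨a, rfl⟩
  rw [← Nat.card_eq_of_bijective _ hbij, Nat.card_eq_fintype_card, Fintype.card_fin]

lemma not_isDiag_of_isIEdge {n : ℕ} {e : Sym2 (HOPVertex n)} (h : IsIEdge e) : ¬ e.IsDiag := by
  obtain ⟨a, rfl⟩ := isIEdge_iff.1 h
  simp

theorem card_nonIEdge (n : ℕ) :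
    Nat.card {e : Sym2 (HOPVertex n) // ¬ e.IsDiag ∧ ¬ IsIEdge e} = 2 * n * (n - 1) := by
  have hsub : {e : Sym2 (HOPVertex n) | IsIEdge e} ⊆ {e | ¬ e.IsDiag} :=
    fun e => not_isDiag_of_isIEdge
  have hnotDiag : {e : Sym2 (HOPVertex n) | ¬ e.IsDiag}.ncard = (2 * n).choose 2 := by
    change Nat.card {e : Sym2 (HOPVertex n) // ¬ e.IsDiag} = _
    rw [Nat.card_eq_fintype_card, Sym2.card_subtype_not_diag, Fintype.card_prod, Fintype.card_fin,
      Fintype.card_fin, mul_comm]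
  change ({e | ¬ e.IsDiag} \ {e | IsIEdge e} : Set (Sym2 (HOPVertex n))).ncard = _
  rw [Set.ncard_sdiff hsub, hnotDiag, ← Nat.card_coe_set_eq, Set.coe_ofPred, card_isIEdge,
    Nat.choose_two_right]
  rcases n with _ | n
  · rfl
  · have h : 2 * (n + 1) * (2 * (n + 1) - 1) / 2 = 2 * (n + 1) * n + (n + 1) := by
      rw [show 2 * (n + 1) - 1 = 2 * n + 1 by omega, mul_assoc, Nat.mul_div_cancel_left _ two_pos]
      ring
    rw [h, Nat.add_sub_cancel, Nat.add_sub_cancel]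

/-- A meal seen at the level of couples: the couples `pair a` sit at tables of size 2, and around
table `i` sit the couples `(head i l).1`, `l : ZMod (m i)`, in this order, `head i l` taking
the seat just before their spouse. -/
structure HOPSeating (n s t : ℕ) (m : Fin t → ℕ) where
  pair : Fin s → Fin n
  head : (i : Fin t) → ZMod (m i) → HOPVertex n
  bijective_couple :
    Function.Bijective (Sum.elim pair fun x : Σ i, ZMod (m i) => (head x.1 x.2).1)

namespace HOPSeating

variable {n s t : ℕ} {m : Fin t → ℕ} (S : HOPSeating n s t m)

def seatAt (i : Fin t) (a : ℕ) : HOPVertex n :=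
  if a % 2 = 0 then S.head i (a / 2 : ℕ) else HOPspouse (S.head i (a / 2 : ℕ))

def seat (i : Fin t) (j : ZMod (2 * m i)) : HOPVertex n := S.seatAt i j.val

def crossEdge (x : Σ i, ZMod (m i)) : Sym2 (HOPVertex n) :=
  s(HOPspouse (S.head x.1 x.2), S.head x.1 (x.2 + 1))

lemma seatAt_mod (i : Fin t) (a : ℕ) : S.seatAt i (a % (2 * m i)) = S.seatAt i a := by
  simp only [seatAt, Nat.mod_mul_right_mod, Nat.mod_mul_right_div_self, ZMod.natCast_mod]

lemma seatAt_two_mul (i : Fin t) (q : ℕ) : S.seatAt i (2 * q) = S.head i q := by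
  simp [seatAt]

lemma seatAt_two_mul_add_one (i : Fin t) (q : ℕ) :
    S.seatAt i (2 * q + 1) = HOPspouse (S.head i q) := by
  simp [seatAt, show (2 * q + 1) / 2 = q by omega]

lemma seat_add_one (i : Fin t) [NeZero (m i)] (j : ZMod (2 * m i)) :
    S.seat i (j + 1) = S.seatAt i (j.val + 1) := by
  rw [seat, ZMod.val_add, ZMod.val_one'' (by omega), seatAt_mod]

lemma seat_natCast (i : Fin t) {a : ℕ} (ha : a < 2 * m i) : S.seat i a = S.seatAt i a := by
  rw [seat, ZMod.val_cast_of_lt ha]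

lemma seat_add_one_of_even (i : Fin t) [NeZero (m i)] (j : ZMod (2 * m i)) (hj : j.val % 2 = 0) :
    S.seat i (j + 1) = HOPspouse (S.seat i j) := by
  obtain ⟨q, hq⟩ : ∃ q, j.val = 2 * q := ⟨j.val / 2, by omega⟩
  rw [seat_add_one, seat, hq, seatAt_two_mul, seatAt_two_mul_add_one]

lemma edge_seat_of_odd (i : Fin t) [NeZero (m i)] (j : ZMod (2 * m i)) (hj : j.val % 2 = 1) :
    s(S.seat i j, S.seat i (j + 1)) = S.crossEdge ⟨i, (j.val / 2 : ℕ)⟩ := by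
  obtain ⟨q, hq⟩ : ∃ q, j.val = 2 * q + 1 := ⟨j.val / 2, by omega⟩
  rw [seat_add_one, seat, hq, seatAt_two_mul_add_one, show 2 * q + 1 + 1 = 2 * (q + 1) by ring,
    seatAt_two_mul, crossEdge]
  simp [show (2 * q + 1) / 2 = q by omega]

lemma crossEdge_eq_edge_seat (i : Fin t) [NeZero (m i)] (l : ZMod (m i)) :
    S.crossEdge ⟨i, l⟩ =
      s(S.seat i (2 * l.val + 1 : ℕ), S.seat i ((2 * l.val + 1 : ℕ) + 1)) := by
  have hval : ((2 * l.val + 1 : ℕ) : ZMod (2 * m i)).val = 2 * l.val + 1 :=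
    ZMod.val_cast_of_lt (by have := ZMod.val_lt l; omega)
  rw [S.edge_seat_of_odd i _ (by omega), hval, show (2 * l.val + 1) / 2 = l.val by omega,
    ZMod.natCast_zmod_val]

lemma fst_head_ne_fst_head_add_one (i : Fin t) (hm : m i ≠ 1) (l : ZMod (m i)) :
    (S.head i l).1 ≠ (S.head i (l + 1)).1 := by
  intro h
  have := S.bijective_couple.1 (a₁ := Sum.inr ⟨i, l⟩) (a₂ := Sum.inr ⟨i, l + 1⟩) h
  exact hm (ZMod.one_eq_zero_iff.1 (by simpa using this))

lemma not_isDiag_crossEdge (x : Σ i, ZMod (m i)) (hm : m x.1 ≠ 1) :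
    ¬ (S.crossEdge x).IsDiag := by
  rw [crossEdge, Sym2.mk_isDiag_iff]
  exact fun h => S.fst_head_ne_fst_head_add_one x.1 hm x.2 (congrArg Prod.fst h :)

lemma not_isIEdge_crossEdge (x : Σ i, ZMod (m i)) (hm : m x.1 ≠ 1) :
    ¬ IsIEdge (S.crossEdge x) :=
  fun h => S.fst_head_ne_fst_head_add_one x.1 hm x.2
    (fst_eq_of_isIEdge (u := HOPspouse (S.head x.1 x.2)) h)

lemma bijective_seat [∀ i, NeZero (m i)] :
    Function.Bijective (Sum.elim
      (fun a : Fin s × Fin 2 =>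
        if a.2 = 0 then ((S.pair a.1, 0) : HOPVertex n) else HOPspouse (S.pair a.1, 0))
      (fun x : Σ i, ZMod (2 * m i) => S.seat x.1 x.2)) := by
  rw [Fintype.bijective_iff_surjective_and_card]
  constructor
  · rintro ⟨a, b⟩
    obtain ⟨x | ⟨i, l⟩, hx⟩ := S.bijective_couple.2 a
    · refine ⟨Sum.inl (x, b), ?_⟩
      simp only [Sum.elim_inl] at hx
      fin_cases b <;> simp [hx, HOPspouse]
    · have hl := ZMod.val_lt l
      rcases eq_or_eq_HOPspouse_of_fst_eq (u := S.head i l) (v := (a, b)) hx with h | h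
      · refine ⟨Sum.inr ⟨i, (2 * l.val : ℕ)⟩, ?_⟩
        change S.seat i _ = _
        rw [h, S.seat_natCast i (by omega), seatAt_two_mul, ZMod.natCast_zmod_val]
      · refine ⟨Sum.inr ⟨i, (2 * l.val + 1 : ℕ)⟩, ?_⟩
        change S.seat i _ = _
        rw [h, S.seat_natCast i (by omega), seatAt_two_mul_add_one, ZMod.natCast_zmod_val]
  · have hn := Fintype.card_of_bijective S.bijective_couple
    simp only [Fintype.card_sum, Fintype.card_prod, Fintype.card_fin, Fintype.card_sigma,
      ZMod.card] at hn ⊢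
    rw [← Finset.mul_sum]
    omega

def toHOPFactor [∀ i, NeZero (m i)] (hm : ∀ i, m i ≠ 1) : HOPFactor n s t m where
  pair a := (S.pair a, 0)
  cyc := S.seat
  alt_even i := S.seat_add_one_of_even i
  alt_odd i j hj := by
    rw [S.edge_seat_of_odd i j hj]
    exact S.not_isIEdge_crossEdge ⟨i, _⟩ (hm i)
  spanning := S.bijective_seat

lemma crossEdge_mem_edges [∀ i, NeZero (m i)] (hm : ∀ i, m i ≠ 1) (x : Σ i, ZMod (m i)) :
    S.crossEdge x ∈ (S.toHOPFactor hm).edges :=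
  Or.inr ⟨x.1, _, S.crossEdge_eq_edge_seat x.1 x.2⟩

lemma exists_crossEdge_of_mem_edges [∀ i, NeZero (m i)] (hm : ∀ i, m i ≠ 1)
    {e : Sym2 (HOPVertex n)} (he : e ∈ (S.toHOPFactor hm).edges) (hI : ¬ IsIEdge e) :
    ∃ x, e = S.crossEdge x := by
  rcases he with ⟨a, rfl⟩ | ⟨i, j, rfl⟩
  · exact absurd ⟨_, rfl⟩ hI
  · rcases Nat.mod_two_eq_zero_or_one j.val with h | h
    · exact absurd ⟨_, congrArg _ (S.seat_add_one_of_even i j h)⟩ hI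
    · exact ⟨_, S.edge_seat_of_odd i j h⟩

end HOPSeating

theorem hopSolution_of_injective_crossEdge {n s t γ : ℕ} {m : Fin t → ℕ}
    [∀ i, NeZero (m i)] (hm : ∀ i, m i ≠ 1)
    (hγ : γ * ∑ i, m i = 2 * n * (n - 1)) (S : Fin γ → HOPSeating n s t m)
    (hinj : Function.Injective fun p : Fin γ × Σ i, ZMod (m i) => (S p.1).crossEdge p.2) :
    HOPSolution n s t m := by
  let f (p : Fin γ × Σ i, ZMod (m i)) :
      {e : Sym2 (HOPVertex n) // ¬ e.IsDiag ∧ ¬ IsIEdge e} :=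
    ⟨(S p.1).crossEdge p.2, (S p.1).not_isDiag_crossEdge _ (hm _),
      (S p.1).not_isIEdge_crossEdge _ (hm _)⟩
  have hf : Function.Bijective f := by
    have hf_inj : Function.Injective f := fun p q h => hinj (congrArg Subtype.val h)
    refine hf_inj.bijective_of_nat_card_le ?_
    rw [card_nonIEdge, ← hγ, Nat.card_eq_fintype_card]
    simp [Fintype.card_sigma, ZMod.card]
  refine ⟨γ, hγ, fun k => (S k).toHOPFactor hm, fun e hdiag hI => ?_⟩
  obtain ⟨⟨k, x⟩, hkx⟩ := hf.2 ⟨e, hdiag, hI⟩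
  obtain rfl : (S k).crossEdge x = e := congrArg Subtype.val hkx
  refine ⟨k, (S k).crossEdge_mem_edges hm x, fun k' hk' => ?_⟩
  obtain ⟨x', hx'⟩ := (S k').exists_crossEdge_of_mem_edges hm hk' hI
  exact congrArg Prod.fst (hinj (a₁ := (k', x')) (a₂ := (k, x)) hx'.symm)

def hopNinePairs : Fin 24 → Fin 3 → Fin 9 :=
  ![![3, 4, 5], ![3, 7, 8], ![0, 1, 3], ![1, 2, 7], ![0, 2, 3], ![3, 4, 6],
    ![1, 5, 6], ![0, 5, 8], ![0, 4, 8], ![2, 5, 7], ![1, 2, 8], ![1, 3, 8],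
    ![2, 4, 6], ![1, 5, 8], ![1, 4, 7], ![0, 6, 7], ![0, 2, 8], ![2, 5, 6],
    ![3, 4, 7], ![3, 6, 7], ![4, 5, 8], ![0, 6, 7], ![1, 5, 6], ![0, 2, 4]]

def hopNineHeads : Fin 24 → Fin 2 → Fin 3 → HOPVertex 9 :=
  ![![![(0, 1), (1, 0), (2, 1)], ![(6, 1), (7, 1), (8, 1)]],
    ![![(0, 0), (1, 0), (6, 1)], ![(2, 1), (4, 1), (5, 1)]],
    ![![(2, 1), (6, 0), (7, 1)], ![(4, 0), (5, 0), (8, 1)]],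
    ![![(0, 0), (3, 0), (5, 0)], ![(4, 1), (6, 1), (8, 1)]],
    ![![(1, 0), (4, 1), (8, 1)], ![(5, 1), (6, 1), (7, 0)]],
    ![![(0, 1), (2, 1), (8, 1)], ![(1, 0), (5, 0), (7, 0)]],
    ![![(0, 1), (3, 1), (7, 0)], ![(2, 0), (4, 0), (8, 1)]],
    ![![(1, 1), (2, 1), (6, 1)], ![(3, 1), (4, 0), (7, 1)]],
    ![![(1, 0), (5, 1), (7, 1)], ![(2, 1), (3, 0), (6, 1)]],
    ![![(0, 1), (4, 1), (6, 0)], ![(1, 0), (3, 0), (8, 0)]],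
    ![![(0, 0), (4, 1), (7, 0)], ![(3, 1), (5, 0), (6, 1)]],
    ![![(0, 0), (4, 0), (6, 0)], ![(2, 0), (5, 1), (7, 0)]],
    ![![(0, 0), (1, 1), (5, 1)], ![(3, 1), (7, 1), (8, 0)]],
    ![![(0, 1), (2, 0), (7, 1)], ![(3, 0), (4, 0), (6, 1)]],
    ![![(0, 0), (2, 1), (3, 1)], ![(5, 0), (6, 0), (8, 1)]],
    ![![(1, 1), (3, 1), (8, 1)], ![(2, 0), (4, 1), (5, 0)]],
    ![![(1, 1), (4, 0), (7, 0)], ![(3, 0), (5, 1), (6, 0)]],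
    ![![(0, 0), (3, 1), (8, 0)], ![(1, 1), (4, 1), (7, 1)]],
    ![![(0, 0), (5, 1), (8, 1)], ![(1, 0), (2, 0), (6, 1)]],
    ![![(0, 1), (4, 0), (5, 1)], ![(1, 1), (2, 0), (8, 0)]],
    ![![(0, 1), (1, 1), (6, 1)], ![(2, 0), (3, 0), (7, 1)]],
    ![![(1, 1), (3, 0), (4, 1)], ![(2, 1), (5, 0), (8, 0)]],
    ![![(0, 1), (7, 0), (8, 0)], ![(2, 0), (3, 1), (4, 1)]],
    ![![(1, 0), (3, 1), (5, 1)], ![(6, 0), (7, 0), (8, 1)]]]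

theorem bijective_couple_hopNine (k : Fin 24) :
    Function.Bijective (Sum.elim (hopNinePairs k)
      fun x : Σ _ : Fin 2, ZMod 3 => (hopNineHeads k x.1 x.2).1) := by
  revert k
  decide

def hopNineSeating (k : Fin 24) : HOPSeating 9 3 2 fun _ => 3 :=
  ⟨hopNinePairs k, hopNineHeads k, bijective_couple_hopNine k⟩

theorem injective_crossEdge_hopNineSeating :
    Function.Injective fun p : Fin 24 × Σ _ : Fin 2, ZMod 3 =>
      (hopNineSeating p.1).crossEdge p.2 := by
  decide +kernel

/-- Lemma 6.3: `HOP(2^⟨3⟩, 6, 6)` has a solution (for `n = 9`, `s = 3`,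
`(m₁, m₂) = (3, 3)`, with `γ = 24` factors). -/
theorem hop_C3_C3_nine : HOPSolution 9 3 2 ![3, 3] := by
  rw [show (![3, 3] : Fin 2 → ℕ) = fun _ => 3 by ext i; fin_cases i <;> rfl]
  exact hopSolution_of_injective_crossEdge (fun _ => by decide) (by norm_num) hopNineSeating
    injective_crossEdge_hopNineSeating
end

section
/- Let k ≥ 0 be an integer, let n = 18k + 9 and s = n − 9. Then HOP(2^⟨s⟩, 4, 6, 8) has a solution, i.e., HOP(2^⟨s⟩, 2m_1, 2m_2, 2m_3) has a solution with (m_1, m_2, m_3) = (2, 3, 4). (In the paper this is stated as: 4K_n^• admits an HOP (C_2, C_3, C_4)-decomposition, which by the paper's Theorem 3.2 is equivalent to the stated HOP solution.) -/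
/-
Write `n = 9 (2k + 1)` and split the couples into the `2k + 1` columns
`{g + (2k + 1) a | a < 9}`. Each factor is a *block* (a 4-, a 6- and an 8-cycle through nine
couples) together with the spouse edges of the remaining `n - 9` couples. The cross edges
(those joining different couples) inside a column are covered by 16 blocks copied from a
solution of `HOP(4, 6, 8)` on nine couples. The cross edges between columns are covered by the
`n` translates (in `ℤ/n`) of `4k` base blocks, whose oriented edges realise every difference
`d ∈ [1, 9k + 4]` not divisible by `2k + 1`, with all four choices of spouses at the two ends.
The blocks have exactly as many edges as there are cross edges, so covering every cross edge
forces every cross edge to be covered once.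
-/

open Finset

lemma not_isIEdge_of_fst_ne {n : ℕ} {u v : HOPVertex n} (h : u.1 ≠ v.1) : ¬ IsIEdge s(u, v) := by
  rintro ⟨w, hw⟩
  rcases Sym2.eq_iff.mp hw with ⟨rfl, rfl⟩ | ⟨rfl, rfl⟩ <;> exact h rfl

lemma fst_ne_of_not_isIEdge {n : ℕ} {u v : HOPVertex n} (hd : ¬ s(u, v).IsDiag)
    (hI : ¬ IsIEdge s(u, v)) : u.1 ≠ v.1 := by
  obtain ⟨p, x⟩ := u
  obtain ⟨q, y⟩ := v
  rintro (rfl : p = q)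
  have hxy : x ≠ y := fun h => hd (by simp [h])
  have hy : ∀ a b : Fin 2, a ≠ b → b = a + 1 := by decide
  exact hI ⟨(p, x), by rw [hy x y hxy]; rfl⟩

abbrev Slot {t : ℕ} (m : Fin t → ℕ) : Type := (i : Fin t) × Fin (m i)

namespace Slot

variable {t : ℕ} {m : Fin t → ℕ}

def next (σ : Slot m) : Slot m :=
  ⟨σ.1, ⟨(σ.2.val + 1) % m σ.1, Nat.mod_lt _ (Nat.zero_lt_of_lt σ.2.isLt)⟩⟩

lemma next_ne (hm : ∀ i, 2 ≤ m i) (σ : Slot m) : σ.next ≠ σ := by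
  obtain ⟨i, a⟩ := σ
  have := hm i
  have := a.isLt
  intro h
  have h2 := congrArg (fun τ : Slot m => τ.2.val) h
  simp only [next] at h2
  rcases Nat.lt_or_ge (a.val + 1) (m i) with h3 | h3
  · rw [Nat.mod_eq_of_lt h3] at h2; omega
  · rw [show a.val + 1 = m i by omega, Nat.mod_self] at h2; omega

lemma card : Fintype.card (Slot m) = ∑ i, m i := by
  simp [Fintype.card_sigma]

end Slot

section

variable {m : ℕ}

lemma ZMod.val_add_one_two_mul (hm : 0 < m) (j : ZMod (2 * m)) :
    (j + 1).val = (j.val + 1) % (2 * m) := by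
  have : NeZero (2 * m) := ⟨by omega⟩
  rw [ZMod.val_add, ZMod.val_one'' (by omega)]

lemma ZMod.val_lt_two_mul (hm : 0 < m) (j : ZMod (2 * m)) : j.val < 2 * m :=
  have : NeZero (2 * m) := ⟨by omega⟩
  j.val_lt

def ZMod.half (hm : 0 < m) (j : ZMod (2 * m)) : Fin m :=
  ⟨j.val / 2, by have := ZMod.val_lt_two_mul hm j; omega⟩

lemma ZMod.val_add_one_of_even (hm : 0 < m) {j : ZMod (2 * m)} (hj : j.val % 2 = 0) :
    (j + 1).val = j.val + 1 := by
  have := ZMod.val_lt_two_mul hm j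
  rw [ZMod.val_add_one_two_mul hm, Nat.mod_eq_of_lt (by omega)]

lemma ZMod.half_add_one_of_even (hm : 0 < m) {j : ZMod (2 * m)} (hj : j.val % 2 = 0) :
    ZMod.half hm (j + 1) = ZMod.half hm j := by
  ext; simp only [ZMod.half, ZMod.val_add_one_of_even hm hj]; omega

lemma ZMod.half_add_one_of_odd (hm : 0 < m) {j : ZMod (2 * m)} (hj : j.val % 2 = 1) :
    (ZMod.half hm (j + 1)).val = ((ZMod.half hm j).val + 1) % m := by
  have := ZMod.val_lt_two_mul hm j
  simp only [ZMod.half, ZMod.val_add_one_two_mul hm]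
  rcases Nat.lt_or_ge (j.val + 1) (2 * m) with h | h
  · rw [Nat.mod_eq_of_lt h, Nat.mod_eq_of_lt (by omega)]; omega
  · rw [show j.val + 1 = 2 * m by omega, Nat.mod_self, show j.val / 2 + 1 = m by omega,
      Nat.mod_self]

lemma ZMod.val_natCast_two_mul_add {a b : ℕ} (ha : a < m) (hb : b < 2) :
    ((2 * a + b : ℕ) : ZMod (2 * m)).val = 2 * a + b := by
  rw [ZMod.val_natCast, Nat.mod_eq_of_lt (by omega)]

lemma ZMod.half_natCast_two_mul_add (hm : 0 < m) (a : Fin m) {b : ℕ} (hb : b < 2) :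
    ZMod.half hm ((2 * a.val + b : ℕ) : ZMod (2 * m)) = a :=
  Fin.ext (by simp only [ZMod.half, ZMod.val_natCast_two_mul_add a.isLt hb]; omega)

end

/-- Cycle `i` visits couple `couple ⟨i, a⟩` at positions `2a, 2a + 1`, entering it at member
`label ⟨i, a⟩`; the non-`I` edges of the cycles are then the edges `tail σ — head σ`. -/
structure CycleBlock (n : ℕ) {t : ℕ} (m : Fin t → ℕ) where
  couple : Slot m ↪ Fin n
  label : Slot m → Fin 2

namespace CycleBlock

variable {n t : ℕ} {m : Fin t → ℕ} (B : CycleBlock n m)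

def tail (σ : Slot m) : HOPVertex n := (B.couple σ, B.label σ + 1)

def head (σ : Slot m) : HOPVertex n := (B.couple σ.next, B.label σ.next)

def edge (σ : Slot m) : Sym2 (HOPVertex n) := s(B.tail σ, B.head σ)

lemma tail_fst_ne_head_fst (hm : ∀ i, 2 ≤ m i) (σ : Slot m) : (B.tail σ).1 ≠ (B.head σ).1 :=
  fun h => Slot.next_ne hm σ (B.couple.injective h).symm

def map {n' : ℕ} (φ : Fin n ↪ Fin n') : CycleBlock n' m :=
  ⟨B.couple.trans φ, B.label⟩

lemma edge_map {n' : ℕ} (φ : Fin n ↪ Fin n') (σ : Slot m) :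
    (B.map φ).edge σ = (B.edge σ).map (Prod.map φ id) := rfl

variable (hm : ∀ i, 2 ≤ m i)

def cycle (i : Fin t) (j : ZMod (2 * m i)) : HOPVertex n :=
  let σ : Slot m := ⟨i, ZMod.half (by have := hm i; omega) j⟩
  (B.couple σ, B.label σ + Fin.ofNat 2 j.val)

lemma cycle_add_one_of_even (i : Fin t) (j : ZMod (2 * m i)) (hj : j.val % 2 = 0) :
    B.cycle hm i (j + 1) = HOPspouse (B.cycle hm i j) := by
  have hm0 : 0 < m i := by have := hm i; omega
  simp only [cycle, HOPspouse, ZMod.half_add_one_of_even hm0 hj, ZMod.val_add_one_of_even hm0 hj,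
    add_assoc, Prod.mk.injEq, true_and]
  congr 1
  ext
  simp [Fin.val_add]

lemma cycle_of_odd (i : Fin t) (j : ZMod (2 * m i)) (hj : j.val % 2 = 1) :
    B.cycle hm i j = B.tail ⟨i, ZMod.half (by have := hm i; omega) j⟩ := by
  have hj' : Fin.ofNat 2 j.val = 1 := Fin.ext (by simp [hj])
  simp only [cycle, tail, hj']

lemma cycle_add_one_of_odd (i : Fin t) (j : ZMod (2 * m i)) (hj : j.val % 2 = 1) :
    B.cycle hm i (j + 1) = B.head ⟨i, ZMod.half (by have := hm i; omega) j⟩ := by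
  have hm0 : 0 < m i := by have := hm i; omega
  have hnext : (⟨i, ZMod.half hm0 (j + 1)⟩ : Slot m) = Slot.next ⟨i, ZMod.half hm0 j⟩ :=
    Sigma.ext rfl (heq_of_eq (Fin.ext (ZMod.half_add_one_of_odd hm0 hj)))
  have hpar : Fin.ofNat 2 (j + 1).val = 0 := by
    have := ZMod.val_lt_two_mul hm0 j
    refine Fin.ext ?_
    simp only [Fin.val_ofNat, ZMod.val_add_one_two_mul hm0]
    rcases Nat.lt_or_ge (j.val + 1) (2 * m i) with h | h
    · rw [Nat.mod_eq_of_lt h]; simp; omega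
    · rw [show j.val + 1 = 2 * m i by omega, Nat.mod_self]; rfl
  simp only [cycle, head, hnext, hpar, add_zero]

lemma cycle_natCast (σ : Slot m) (b : Fin 2) :
    B.cycle hm σ.1 ((2 * σ.2.val + b.val : ℕ) : ZMod (2 * m σ.1)) =
      (B.couple σ, B.label σ + b) := by
  have hpar : Fin.ofNat 2 ((2 * σ.2.val + b.val : ℕ) : ZMod (2 * m σ.1)).val = b := Fin.ext (by
    simp only [Fin.val_ofNat, ZMod.val_natCast_two_mul_add σ.2.isLt b.isLt]; omega)
  simp only [cycle, ZMod.half_natCast_two_mul_add _ _ b.isLt, hpar]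

lemma card_compl_range {s : ℕ} (hs : s + ∑ i, m i = n) :
    Fintype.card {p : Fin n // p ∉ Set.range B.couple} = s := by
  rw [Fintype.card_subtype_compl, Fintype.card_fin, Fintype.card_range, Slot.card]
  omega

noncomputable def toFactor {s : ℕ} (hs : s + ∑ i, m i = n) : HOPFactor n s t m where
  pair a := ((Fintype.equivFinOfCardEq (B.card_compl_range hs)).symm a, 0)
  cyc := B.cycle hm
  alt_even := B.cycle_add_one_of_even hm
  alt_odd i j hj := by
    rw [B.cycle_of_odd hm i j hj, B.cycle_add_one_of_odd hm i j hj]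
    exact not_isIEdge_of_fst_ne (B.tail_fst_ne_head_fst hm _)
  spanning := by
    have : ∀ i, NeZero (2 * m i) := fun i => ⟨by have := hm i; omega⟩
    rw [Fintype.bijective_iff_surjective_and_card]
    refine ⟨?_, ?_⟩
    · rintro ⟨p, x⟩
      by_cases hp : p ∈ Set.range B.couple
      · obtain ⟨σ, rfl⟩ := hp
        refine ⟨Sum.inr ⟨σ.1, ((2 * σ.2.val + (x - B.label σ).val : ℕ) : ZMod (2 * m σ.1))⟩, ?_⟩
        rw [Sum.elim_inr, B.cycle_natCast hm, add_sub_cancel]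
      · refine ⟨Sum.inl ((Fintype.equivFinOfCardEq (B.card_compl_range hs)) ⟨p, hp⟩, x), ?_⟩
        fin_cases x <;> simp [HOPspouse]
    · simp only [Fintype.card_sum, Fintype.card_prod, Fintype.card_sigma, ZMod.card,
        Fintype.card_fin, ← Finset.mul_sum]
      omega

variable {s : ℕ} (hs : s + ∑ i, m i = n)

lemma edge_mem_edges (σ : Slot m) : B.edge σ ∈ (B.toFactor hm hs).edges := by
  have hm0 : 0 < m σ.1 := by have := hm σ.1; omega
  set j : ZMod (2 * m σ.1) := ((2 * σ.2.val + (1 : Fin 2).val : ℕ) : ZMod (2 * m σ.1))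
  have hj : j.val % 2 = 1 := by
    simp only [j, ZMod.val_natCast_two_mul_add σ.2.isLt (Fin.isLt 1)]; omega
  have hhalf : ZMod.half hm0 j = σ.2 := ZMod.half_natCast_two_mul_add hm0 σ.2 (Fin.isLt 1)
  refine Or.inr ⟨σ.1, j, ?_⟩
  change s(B.tail σ, B.head σ) = s(B.cycle hm σ.1 j, B.cycle hm σ.1 (j + 1))
  rw [B.cycle_add_one_of_odd hm _ _ hj, B.cycle_of_odd hm _ _ hj, hhalf]

lemma exists_eq_edge_of_mem_edges {u v : HOPVertex n} (huv : u.1 ≠ v.1)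
    (he : s(u, v) ∈ (B.toFactor hm hs).edges) : ∃ σ, s(u, v) = B.edge σ := by
  rcases he with ⟨a, ha⟩ | ⟨i, j, hj⟩
  · exact absurd ⟨_, ha⟩ (not_isIEdge_of_fst_ne huv)
  · change s(u, v) = s(B.cycle hm i j, B.cycle hm i (j + 1)) at hj
    rcases Nat.mod_two_eq_zero_or_one j.val with h | h
    · rw [B.cycle_add_one_of_even hm i j h] at hj
      exact absurd ⟨_, hj⟩ (not_isIEdge_of_fst_ne huv)
    · rw [B.cycle_of_odd hm i j h, B.cycle_add_one_of_odd hm i j h] at hj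
      exact ⟨_, hj⟩

end CycleBlock

lemma card_filter_fst_ne (n : ℕ) :
    #(univ.filter fun uv : HOPVertex n × HOPVertex n => uv.1.1 ≠ uv.2.1) = 4 * n * (n - 1) := by
  have : (univ.filter fun uv : HOPVertex n × HOPVertex n => uv.1.1 ≠ uv.2.1) =
      ((univ : Finset (Fin n)).offDiag ×ˢ (univ : Finset (Fin 2 × Fin 2))).map
        (Equiv.prodProdProdComm _ _ _ _).toEmbedding := by
    ext ⟨⟨p, x⟩, q, y⟩
    simp
  rw [this, card_map, card_product, offDiag_card, ← Nat.mul_sub_one]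
  simp only [card_univ, Fintype.card_fin, Fintype.card_prod]
  ring

namespace CycleBlock

variable {n t : ℕ} {m : Fin t → ℕ} {ι : Type*} [Fintype ι] (B : ι → CycleBlock n m)

def arc (x : ι × Slot m × Bool) : HOPVertex n × HOPVertex n :=
  if x.2.2 then ((B x.1).head x.2.1, (B x.1).tail x.2.1)
  else ((B x.1).tail x.2.1, (B x.1).head x.2.1)

def CoversCrossEdges : Prop :=
  ∀ u v : HOPVertex n, u.1 ≠ v.1 → ∃ b σ, s(u, v) = (B b).edge σ

variable {B}

lemma arc_injective (hm : ∀ i, 2 ≤ m i) (hcard : Fintype.card ι * ∑ i, m i = 2 * n * (n - 1))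
    (hcover : CoversCrossEdges B) : Function.Injective (arc B) := by
  intro x y hxy
  refine Finset.inj_on_of_surj_on_of_card_le (s := univ)
    (t := univ.filter fun uv : HOPVertex n × HOPVertex n => uv.1.1 ≠ uv.2.1)
    (fun x _ => arc B x) ?_ ?_ ?_ (mem_univ x) (mem_univ y) hxy
  · rintro ⟨b, σ, o⟩ -
    have := (B b).tail_fst_ne_head_fst hm σ
    cases o <;> simp [arc, this, Ne.symm this]
  · rintro ⟨u, v⟩ huv
    obtain ⟨b, σ, he⟩ := hcover u v (mem_filter.mp huv).2
    rcases Sym2.eq_iff.mp he with ⟨rfl, rfl⟩ | ⟨rfl, rfl⟩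
    · exact ⟨(b, σ, false), mem_univ _, rfl⟩
    · exact ⟨(b, σ, true), mem_univ _, rfl⟩
  · rw [card_filter_fst_ne, card_univ, Fintype.card_prod, Fintype.card_prod, Slot.card,
      Fintype.card_bool, ← mul_assoc, hcard]
    exact le_of_eq (by ring)

lemma eq_of_edge_eq (hm : ∀ i, 2 ≤ m i) (hcard : Fintype.card ι * ∑ i, m i = 2 * n * (n - 1))
    (hcover : CoversCrossEdges B) {b b' : ι} {σ σ' : Slot m}
    (h : (B b).edge σ = (B b').edge σ') : b = b' := by
  obtain ⟨o, ho⟩ : ∃ o, arc B (b, σ, false) = arc B (b', σ', o) := by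
    rcases Sym2.eq_iff.mp h with ⟨h1, h2⟩ | ⟨h1, h2⟩
    · exact ⟨false, by simp [arc, h1, h2]⟩
    · exact ⟨true, by simp [arc, h1, h2]⟩
  exact congrArg Prod.fst (arc_injective hm hcard hcover ho)

end CycleBlock

open CycleBlock in
theorem hopSolution_of_cover {n s t : ℕ} {m : Fin t → ℕ} {ι : Type*} [Fintype ι]
    {B : ι → CycleBlock n m} (hm : ∀ i, 2 ≤ m i) (hs : s + ∑ i, m i = n)
    (hcard : Fintype.card ι * ∑ i, m i = 2 * n * (n - 1)) (hcover : CoversCrossEdges B) :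
    HOPSolution n s t m := by
  let e := (Fintype.equivFin ι).symm
  refine ⟨Fintype.card ι, hcard, fun r => (B (e r)).toFactor hm hs, ?_⟩
  intro uv hd hI
  induction uv using Sym2.ind with
  | _ u v =>
    have huv := fst_ne_of_not_isIEdge hd hI
    obtain ⟨b, σ, he⟩ := hcover u v huv
    refine ⟨e.symm b, ?_, fun r hr => ?_⟩
    · change s(u, v) ∈ ((B (e (e.symm b))).toFactor hm hs).edges
      rw [Equiv.apply_symm_apply, he]
      exact (B b).edge_mem_edges hm hs σ
    · obtain ⟨σ', he'⟩ := (B (e r)).exists_eq_edge_of_mem_edges hm hs huv hr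
      rw [← eq_of_edge_eq hm hcard hcover (he'.symm.trans he), Equiv.symm_apply_apply]

def Slot.toFin9 (σ : Slot ![2, 3, 4]) : Fin 9 :=
  ⟨![0, 2, 5] σ.1 + σ.2, by obtain ⟨i, a⟩ := σ; fin_cases i <;> simp <;> omega⟩

lemma Slot.toFin9_injective : Function.Injective Slot.toFin9 := by decide

/-- Together with `baseLabel`: the 16 blocks of a solution of `HOP(4, 6, 8)` on nine couples,
slots listed in the order of `Slot.toFin9`. -/
def baseCouple : Fin 16 → Fin 9 → Fin 9 :=
  ![![2, 6, 3, 7, 8, 0, 1, 4, 5],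
    ![3, 7, 0, 1, 2, 4, 5, 6, 8],
    ![4, 7, 3, 6, 8, 0, 2, 1, 5],
    ![6, 7, 0, 2, 8, 1, 3, 5, 4],
    ![1, 8, 0, 3, 4, 2, 6, 5, 7],
    ![0, 8, 1, 5, 7, 2, 4, 3, 6],
    ![0, 7, 1, 5, 6, 2, 4, 3, 8],
    ![6, 8, 1, 3, 5, 0, 2, 7, 4],
    ![0, 3, 5, 6, 7, 1, 4, 2, 8],
    ![0, 6, 3, 5, 7, 1, 4, 2, 8],
    ![2, 5, 0, 1, 3, 4, 6, 7, 8],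
    ![1, 7, 0, 4, 6, 2, 3, 8, 5],
    ![2, 3, 0, 5, 8, 1, 6, 4, 7],
    ![1, 2, 3, 4, 6, 0, 5, 8, 7],
    ![2, 7, 4, 5, 8, 0, 1, 3, 6],
    ![1, 6, 2, 3, 5, 0, 4, 8, 7]]

def baseLabel : Fin 16 → Fin 9 → Fin 2 :=
  ![![0, 0, 1, 1, 1, 1, 0, 0, 1],
    ![0, 1, 0, 1, 1, 0, 0, 1, 1],
    ![0, 1, 1, 0, 0, 0, 1, 1, 0],
    ![0, 0, 1, 1, 0, 0, 0, 1, 0],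
    ![0, 0, 0, 1, 1, 0, 1, 0, 0],
    ![0, 0, 0, 0, 1, 0, 1, 1, 1],
    ![0, 0, 1, 1, 1, 1, 0, 1, 0],
    ![0, 1, 1, 1, 0, 0, 0, 0, 0],
    ![0, 0, 0, 0, 1, 1, 0, 0, 0],
    ![0, 0, 1, 1, 1, 0, 1, 1, 1],
    ![0, 1, 0, 0, 1, 0, 1, 0, 0],
    ![0, 0, 0, 1, 1, 1, 1, 1, 1],
    ![0, 1, 0, 1, 1, 1, 1, 0, 0],
    ![0, 1, 1, 0, 0, 1, 0, 1, 0],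
    ![0, 1, 1, 1, 0, 1, 1, 0, 0],
    ![0, 1, 0, 0, 0, 0, 0, 0, 1]]

lemma baseCouple_injective : ∀ f, Function.Injective (baseCouple f) := by decide

def baseBlock (f : Fin 16) : CycleBlock 9 ![2, 3, 4] where
  couple := ⟨baseCouple f ∘ Slot.toFin9, (baseCouple_injective f).comp Slot.toFin9_injective⟩
  label := baseLabel f ∘ Slot.toFin9

lemma baseBlock_covers : CycleBlock.CoversCrossEdges baseBlock := by
  unfold CycleBlock.CoversCrossEdges
  decide +kernel

def Slot.nextFin9 : Fin 9 → Fin 9 := ![1, 0, 3, 4, 2, 6, 7, 8, 5]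

lemma Slot.exists_toFin9 :
    ∀ s : Fin 9, ∃ σ : Slot ![2, 3, 4], σ.toFin9 = s ∧ σ.next.toFin9 = Slot.nextFin9 s := by
  decide

/-- The couples of base block `j ∈ [1, k]` (digon `ℓ < 2` or `ℓ ≥ 2`). Its oriented slot
differences are `2j - 1` resp. `6k + 3 + j` on the digon and `2j`, `8k + 4 - j`, `-(8k + 4 + j)`,
`2k + 2j`, `4k + 2j + 2`, `-(2k + 2j + 1)`, `-(4k + 2j + 1)` on the other cycles. -/
def rotNat (k j : ℕ) (ℓ : Fin 4) : Fin 9 → ℕ :=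
  ![if ℓ.val < 2 then 12 * k + 4 else 18 * k + 8,
    if ℓ.val < 2 then 12 * k + 3 + 2 * j else 6 * k + 2 + j,
    0, 2 * j, 8 * k + 4 + j, 2 * k + 1, 4 * k + 2 * j + 1, 8 * k + 4 * j + 3, 6 * k + 2 * j + 2]

def rotLabel : Fin 4 → Fin 9 → Fin 2 :=
  ![![0, 0, 0, 0, 0, 0, 0, 0, 0], ![1, 0, 1, 1, 0, 1, 1, 1, 1],
    ![0, 0, 0, 1, 1, 0, 1, 0, 1], ![1, 0, 1, 0, 1, 1, 0, 1, 0]]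

lemma rotNat_lt (k : ℕ) (J : Fin k) (ℓ : Fin 4) (s : Fin 9) :
    rotNat k (J.val + 1) ℓ s < 18 * k + 9 := by
  have := J.isLt
  fin_cases s <;> simp [rotNat] <;> (try split_ifs) <;> omega

lemma rotNat_injective (k : ℕ) (J : Fin k) (ℓ : Fin 4) :
    Function.Injective (rotNat k (J.val + 1) ℓ) := by
  have := J.isLt
  intro s s' h
  fin_cases s <;> fin_cases s' <;> simp [rotNat] at h ⊢ <;> (try split_ifs at h) <;> omega

def rotCouple (k : ℕ) (J : Fin k) (ℓ : Fin 4) (s : Fin 9) : Fin (18 * k + 9) :=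
  ⟨rotNat k (J.val + 1) ℓ s, rotNat_lt k J ℓ s⟩

def rotBase (k : ℕ) (J : Fin k) (ℓ : Fin 4) : CycleBlock (18 * k + 9) ![2, 3, 4] where
  couple := ⟨fun σ => rotCouple k J ℓ σ.toFin9, fun _ _ h =>
    Slot.toFin9_injective (rotNat_injective k J ℓ (congrArg Fin.val h))⟩
  label σ := rotLabel ℓ σ.toFin9

lemma rotBase_couple (k : ℕ) (J : Fin k) (ℓ : Fin 4) (σ : Slot ![2, 3, 4]) :
    (rotBase k J ℓ).couple σ = rotCouple k J ℓ σ.toFin9 := rfl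

lemma rotBase_label (k : ℕ) (J : Fin k) (ℓ : Fin 4) (σ : Slot ![2, 3, 4]) :
    (rotBase k J ℓ).label σ = rotLabel ℓ σ.toFin9 := rfl

def DifferenceCovered (k : ℕ) (δ : Fin (18 * k + 9)) : Prop :=
  ∀ x y : Fin 2, ∃ (J : Fin k) (ℓ : Fin 4) (σ : Slot ![2, 3, 4]) (a : Fin (18 * k + 9)),
    s((a, x), (a + δ, y)) = (rotBase k J ℓ).edge σ

lemma DifferenceCovered.of_neg {k : ℕ} {δ : Fin (18 * k + 9)} (h : DifferenceCovered k (-δ)) :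
    DifferenceCovered k δ := by
  intro x y
  obtain ⟨J, ℓ, σ, a, he⟩ := h y x
  refine ⟨J, ℓ, σ, a + -δ, ?_⟩
  rw [← he, Sym2.eq_swap, neg_add_cancel_right]

lemma rotLabel_slot : ∀ s : Fin 9, 2 ≤ s.val → ∀ x y : Fin 2,
    ∃ ℓ, rotLabel ℓ s + 1 = x ∧ rotLabel ℓ (Slot.nextFin9 s) = y := by
  decide

lemma rotLabel_digon : ∀ lo : Bool, ∀ x y : Fin 2, ∃ ℓ : Fin 4, (ℓ.val < 2 ↔ lo = true) ∧
    ((rotLabel ℓ 0 + 1 = x ∧ rotLabel ℓ 1 = y) ∨ (rotLabel ℓ 0 = x ∧ rotLabel ℓ 1 + 1 = y)) := by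
  decide

lemma differenceCovered_of_slot {k : ℕ} {δ : Fin (18 * k + 9)} (J : Fin k) (s : Fin 9)
    (hs : 2 ≤ s.val) (h : ∀ ℓ, rotCouple k J ℓ (Slot.nextFin9 s) = rotCouple k J ℓ s + δ) :
    DifferenceCovered k δ := by
  intro x y
  obtain ⟨ℓ, hx, hy⟩ := rotLabel_slot s hs x y
  obtain ⟨σ, hσ, hσ'⟩ := Slot.exists_toFin9 s
  refine ⟨J, ℓ, σ, rotCouple k J ℓ s, ?_⟩
  simp only [CycleBlock.edge, CycleBlock.tail, CycleBlock.head, rotBase_couple, rotBase_label, hσ,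
    hσ', h ℓ, hx, hy]

lemma differenceCovered_of_slot_rev {k : ℕ} {δ : Fin (18 * k + 9)} (J : Fin k) (s : Fin 9)
    (hs : 2 ≤ s.val) (h : ∀ ℓ, rotCouple k J ℓ s = rotCouple k J ℓ (Slot.nextFin9 s) + δ) :
    DifferenceCovered k δ :=
  (differenceCovered_of_slot J s hs fun ℓ => by rw [h ℓ, add_neg_cancel_right]).of_neg

lemma differenceCovered_of_digon {k : ℕ} {δ : Fin (18 * k + 9)} (J : Fin k) (lo : Bool)
    (h : ∀ ℓ : Fin 4, (ℓ.val < 2 ↔ lo = true) → rotCouple k J ℓ 1 = rotCouple k J ℓ 0 + δ) :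
    DifferenceCovered k δ := by
  intro x y
  obtain ⟨ℓ, hlo, hxy⟩ := rotLabel_digon lo x y
  obtain ⟨σ₀, h₀, h₀'⟩ := Slot.exists_toFin9 0
  obtain ⟨σ₁, h₁, h₁'⟩ := Slot.exists_toFin9 1
  have h01 := h ℓ hlo
  rcases hxy with ⟨hx, hy⟩ | ⟨hx, hy⟩
  · refine ⟨J, ℓ, σ₀, rotCouple k J ℓ 0, ?_⟩
    simp only [CycleBlock.edge, CycleBlock.tail, CycleBlock.head, rotBase_couple, rotBase_label, h₀,
      h₀', show Slot.nextFin9 0 = 1 from rfl, ← h01, hx, hy]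
  · refine ⟨J, ℓ, σ₁, rotCouple k J ℓ 0, ?_⟩
    simp only [CycleBlock.edge, CycleBlock.tail, CycleBlock.head, rotBase_couple, rotBase_label, h₁,
      h₁', show Slot.nextFin9 1 = 0 from rfl, ← h01, hx, hy]
    exact Sym2.eq_swap

lemma Fin.eq_add_of_val {n : ℕ} {a b c : Fin n}
    (h : c.val = a.val + b.val ∨ c.val + n = a.val + b.val) : c = a + b :=
  Fin.ext (by rw [Fin.val_add_eq_ite]; split_ifs <;> omega)

lemma differenceCovered_of_le {k d : ℕ} (hd1 : 1 ≤ d) (hd : d ≤ 9 * k + 4)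
    (hnd : ¬ (2 * k + 1) ∣ d) : DifferenceCovered k ⟨d, by omega⟩ := by
  have hnd' : ∀ c, d ≠ (2 * k + 1) * c := fun c h => hnd ⟨c, h⟩
  have := hnd' 1; have := hnd' 2; have := hnd' 3; have := hnd' 4
  rcases (show (d % 2 = 1 ∧ d ≤ 2 * k) ∨ (d % 2 = 0 ∧ d ≤ 2 * k) ∨
      (d % 2 = 0 ∧ 2 * k + 2 ≤ d ∧ d ≤ 4 * k) ∨ (d % 2 = 1 ∧ 2 * k + 3 ≤ d ∧ d ≤ 4 * k + 1) ∨
      (d % 2 = 1 ∧ 4 * k + 3 ≤ d ∧ d ≤ 6 * k + 1) ∨ (d % 2 = 0 ∧ 4 * k + 4 ≤ d ∧ d ≤ 6 * k + 2) ∨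
      (6 * k + 4 ≤ d ∧ d ≤ 7 * k + 3) ∨ (7 * k + 4 ≤ d ∧ d ≤ 8 * k + 3) ∨
      (8 * k + 5 ≤ d ∧ d ≤ 9 * k + 4) by omega)
    with h | h | h | h | h | h | h | h | h
  · exact differenceCovered_of_digon ⟨(d + 1) / 2 - 1, by omega⟩ true fun ℓ hℓ =>
      Fin.eq_add_of_val (by simp only [iff_true] at hℓ; simp [rotCouple, rotNat, hℓ]; omega)
  · exact differenceCovered_of_slot ⟨d / 2 - 1, by omega⟩ 2 (by decide) fun ℓ =>
      Fin.eq_add_of_val (by simp [rotCouple, rotNat, Slot.nextFin9]; omega)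
  · exact differenceCovered_of_slot ⟨(d - 2 * k) / 2 - 1, by omega⟩ 5 (by decide) fun ℓ =>
      Fin.eq_add_of_val (by simp [rotCouple, rotNat, Slot.nextFin9]; omega)
  · exact differenceCovered_of_slot_rev ⟨(d - 2 * k - 1) / 2 - 1, by omega⟩ 7 (by decide) fun ℓ =>
      Fin.eq_add_of_val (by simp [rotCouple, rotNat, Slot.nextFin9]; omega)
  · exact differenceCovered_of_slot_rev ⟨(d - 4 * k - 1) / 2 - 1, by omega⟩ 8 (by decide) fun ℓ =>
      Fin.eq_add_of_val (by simp [rotCouple, rotNat, Slot.nextFin9]; omega)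
  · exact differenceCovered_of_slot ⟨(d - 4 * k - 2) / 2 - 1, by omega⟩ 6 (by decide) fun ℓ =>
      Fin.eq_add_of_val (by simp [rotCouple, rotNat, Slot.nextFin9]; omega)
  · exact differenceCovered_of_digon ⟨d - 6 * k - 4, by omega⟩ false fun ℓ hℓ =>
      Fin.eq_add_of_val (by
        simp only [Bool.false_eq_true, iff_false] at hℓ; simp [rotCouple, rotNat, hℓ]; omega)
  · exact differenceCovered_of_slot ⟨8 * k + 3 - d, by omega⟩ 3 (by decide) fun ℓ =>
      Fin.eq_add_of_val (by simp [rotCouple, rotNat, Slot.nextFin9]; omega)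
  · exact differenceCovered_of_slot_rev ⟨d - 8 * k - 5, by omega⟩ 4 (by decide) fun ℓ =>
      Fin.eq_add_of_val (by simp [rotCouple, rotNat, Slot.nextFin9]; omega)

lemma dvd_eighteen_mul_add_nine (k : ℕ) : 2 * k + 1 ∣ 18 * k + 9 := ⟨9, by ring⟩

lemma differenceCovered {k : ℕ} (δ : Fin (18 * k + 9)) (hδ : ¬ (2 * k + 1) ∣ δ.val) :
    DifferenceCovered k δ := by
  have hδ0 : δ.val ≠ 0 := fun h => hδ (h ▸ dvd_zero _)
  rcases le_or_gt δ.val (9 * k + 4) with hle | hgt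
  · exact differenceCovered_of_le (by omega) hle hδ
  · have hneg : ¬ (2 * k + 1) ∣ 18 * k + 9 - δ.val := fun h => hδ (by
      simpa [Nat.sub_sub_self δ.isLt.le] using Nat.dvd_sub (dvd_eighteen_mul_add_nine k) h)
    refine DifferenceCovered.of_neg ?_
    convert differenceCovered_of_le (k := k) (by omega) (by omega) hneg using 1
    ext
    rw [Fin.val_neg', Nat.mod_eq_of_lt (by omega)]

lemma not_dvd_val_sub {k : ℕ} {p q : Fin (18 * k + 9)}
    (h : p.val % (2 * k + 1) ≠ q.val % (2 * k + 1)) : ¬ (2 * k + 1) ∣ (q - p).val := by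
  rw [Fin.val_sub, Nat.dvd_mod_iff (dvd_eighteen_mul_add_nine k), ← ZMod.natCast_eq_zero_iff,
    Nat.cast_add, Nat.cast_sub p.isLt.le, (ZMod.natCast_eq_zero_iff _ _).mpr
      (dvd_eighteen_mul_add_nine k), zero_sub, neg_add_eq_zero]
  exact fun he => h ((ZMod.natCast_eq_natCast_iff' _ _ _).mp he)

def rotBlock (k : ℕ) (J : Fin k) (ℓ : Fin 4) (t : Fin (18 * k + 9)) :
    CycleBlock (18 * k + 9) ![2, 3, 4] :=
  (rotBase k J ℓ).map (Equiv.addRight t).toEmbedding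

lemma DifferenceCovered.exists_rotBlock_edge {k : ℕ} {p q : Fin (18 * k + 9)}
    (h : DifferenceCovered k (q - p)) (x y : Fin 2) :
    ∃ J ℓ t σ, s((p, x), (q, y)) = (rotBlock k J ℓ t).edge σ := by
  obtain ⟨J, ℓ, σ, a, he⟩ := h x y
  refine ⟨J, ℓ, p - a, σ, ?_⟩
  rw [rotBlock, CycleBlock.edge_map, ← he, Sym2.map_mk]
  simp only [Prod.map, Equiv.coe_toEmbedding, Equiv.coe_addRight, id]
  congr 2 <;> abel

def colEmb (k : ℕ) (g : Fin (2 * k + 1)) : Fin 9 ↪ Fin (18 * k + 9) where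
  toFun a := ⟨g.val + (2 * k + 1) * a.val, by have := g.isLt; have := a.isLt; nlinarith⟩
  inj' a b h := Fin.ext (Nat.eq_of_mul_eq_mul_left (Nat.succ_pos _)
    (Nat.add_left_cancel (congrArg Fin.val h)))

def columnBlock (k : ℕ) (g : Fin (2 * k + 1)) (f : Fin 16) : CycleBlock (18 * k + 9) ![2, 3, 4] :=
  (baseBlock f).map (colEmb k g)

lemma colEmb_mod_div (k : ℕ) (p : Fin (18 * k + 9)) :
    colEmb k ⟨p.val % (2 * k + 1), Nat.mod_lt _ (by omega)⟩
      ⟨p.val / (2 * k + 1), Nat.div_lt_of_lt_mul (by have := p.isLt; linarith)⟩ = p :=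
  Fin.ext (Nat.mod_add_div _ _)

lemma exists_columnBlock_edge {k : ℕ} {p q : Fin (18 * k + 9)} (hpq : p ≠ q)
    (hcol : p.val % (2 * k + 1) = q.val % (2 * k + 1)) (x y : Fin 2) :
    ∃ g f σ, s((p, x), (q, y)) = (columnBlock k g f).edge σ := by
  have hp := colEmb_mod_div k p
  have hq := colEmb_mod_div k q
  simp only [← hcol] at hq
  set g : Fin (2 * k + 1) := ⟨p.val % (2 * k + 1), _⟩
  set a : Fin 9 := ⟨p.val / (2 * k + 1), _⟩
  set b : Fin 9 := ⟨q.val / (2 * k + 1), _⟩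
  have hab : a ≠ b := fun h => hpq (by rw [← hp, ← hq, h])
  obtain ⟨f, σ, he⟩ := baseBlock_covers (a, x) (b, y) hab
  refine ⟨g, f, σ, ?_⟩
  rw [columnBlock, CycleBlock.edge_map, ← he, Sym2.map_mk]
  simp only [Prod.map, id, hp, hq]

abbrev BlockIndex (k : ℕ) : Type :=
  (Fin (2 * k + 1) × Fin 16) ⊕ ((Fin k × Fin 4) × Fin (18 * k + 9))

def hopBlock (k : ℕ) : BlockIndex k → CycleBlock (18 * k + 9) ![2, 3, 4] :=
  Sum.elim (fun gf => columnBlock k gf.1 gf.2) (fun r => rotBlock k r.1.1 r.1.2 r.2)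

lemma hopBlock_covers (k : ℕ) : CycleBlock.CoversCrossEdges (hopBlock k) := by
  rintro ⟨p, x⟩ ⟨q, y⟩ (hpq : p ≠ q)
  by_cases hcol : p.val % (2 * k + 1) = q.val % (2 * k + 1)
  · obtain ⟨g, f, σ, he⟩ := exists_columnBlock_edge hpq hcol x y
    exact ⟨Sum.inl (g, f), σ, he⟩
  · obtain ⟨J, ℓ, t, σ, he⟩ :=
      (differenceCovered (q - p) (not_dvd_val_sub hcol)).exists_rotBlock_edge x y
    exact ⟨Sum.inr ((J, ℓ), t), σ, he⟩

lemma sum_two_three_four : ∑ i, ![2, 3, 4] i = 9 := rfl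

lemma card_blockIndex_mul (k : ℕ) :
    Fintype.card (BlockIndex k) * ∑ i, ![2, 3, 4] i = 2 * (18 * k + 9) * (18 * k + 9 - 1) := by
  simp only [Fintype.card_sum, Fintype.card_prod, Fintype.card_fin, sum_two_three_four,
    show 18 * k + 9 - 1 = 18 * k + 8 by omega]
  ring

/-- Lemma 6.7: for `k ≥ 0`, `n = 18k + 9` and `s = n - 9`,
`HOP(2^⟨s⟩, 4, 6, 8)` has a solution. -/
theorem hop_C2_C3_C4_mod_nine (k n s : ℕ) (hn : n = 18 * k + 9) (hs : s = n - 9) :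
    HOPSolution n s 3 ![2, 3, 4] := by
  subst hn hs
  exact hopSolution_of_cover (by decide) (by rw [sum_two_three_four]; omega)
    (card_blockIndex_mul k) (hopBlock_covers k)
end

section
/- Let n ≥ 10 be an integer with n ≡ 1 (mod 20) or n ≡ 5 (mod 20), and let s = n − 10. Then HOP(2^⟨s⟩, 4, 4, 4, 4, 4) has a solution, i.e., HOP(2^⟨s⟩, 2m_1, …, 2m_5) has a solution with m_1 = ⋯ = m_5 = 2. (In the paper this is stated as: 4K_n^• admits an HOP (C_2, C_2, C_2, C_2, C_2)-decomposition, which by the paper's Theorem 3.2 is equivalent to the stated HOP solution.) -/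
-- ===== auxiliary constructions =====


lemma natCast_inj_of_lt {n a b : ℕ} (ha : a < n) (hb : b < n)
    (h : (a : ZMod n) = b) : a = b :=
  ((ZMod.natCast_eq_natCast_iff a b n).mp h).eq_of_lt_of_lt ha hb

lemma natCast_cases {n a b : ℕ} (hn : 0 < n) (ha : a < 2 * n) (hb : b < 2 * n)
    (h : (a : ZMod n) = b) : a = b ∨ a = b + n ∨ b = a + n := by
  have h' : a ≡ b [MOD n] := (ZMod.natCast_eq_natCast_iff a b n).mp h
  obtain ⟨t, ht⟩ := (Nat.modEq_iff_dvd).mp h'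
  have hA : ((a : ℤ)) < 2 * n := by exact_mod_cast ha
  have hB : ((b : ℤ)) < 2 * n := by exact_mod_cast hb
  have h0a : (0 : ℤ) ≤ a := Int.natCast_nonneg a
  have h0b : (0 : ℤ) ≤ b := Int.natCast_nonneg b
  have hn' : (0 : ℤ) < n := by exact_mod_cast hn
  have ht2 : t = -1 ∨ t = 0 ∨ t = 1 := by
    rcases lt_trichotomy t 0 with hc | hc | hc
    · left; by_contra hne
      have h2 : t ≤ -2 := by omega
      nlinarith
    · right; left; exact hc
    · right; right; by_contra hne
      have h2 : 2 ≤ t := by omega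
      nlinarith
  rcases ht2 with rfl | rfl | rfl <;> omega

lemma not_isIEdge_of_ne {n : ℕ} {v u : Fin n} (h : v ≠ u) (x y : Fin 2) :
    ¬ IsIEdge s((v, x), (u, y)) := by
  rintro ⟨⟨p1, p2⟩, hp⟩
  simp only [HOPspouse, Sym2.eq_iff, Prod.mk.injEq] at hp
  rcases hp with ⟨⟨h1, -⟩, ⟨h2, -⟩⟩ | ⟨⟨h1, -⟩, ⟨h2, -⟩⟩ <;> exact h (h1.trans h2.symm)

def ztf {n : ℕ} [NeZero n] (x : ZMod n) : Fin n := ⟨x.val, ZMod.val_lt x⟩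

lemma ztf_inj {n : ℕ} [NeZero n] {a b : ZMod n} (h : ztf a = ztf b) : a = b := by
  have := congrArg Fin.val h
  exact ZMod.val_injective n this

def flat {n : ℕ} (p : Fin 5 → ZMod n × ZMod n) (r : Fin 10) : ZMod n :=
  if r.val % 2 = 0 then (p ⟨r.val / 2, by have := r.isLt; omega⟩).1
  else (p ⟨r.val / 2, by have := r.isLt; omega⟩).2

def idxE (i : Fin 5) : Fin 10 := ⟨2 * i.val, by have := i.isLt; omega⟩
def idxO (i : Fin 5) : Fin 10 := ⟨2 * i.val + 1, by have := i.isLt; omega⟩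

lemma flat_idxE {n : ℕ} (p : Fin 5 → ZMod n × ZMod n) (i : Fin 5) :
    flat p (idxE i) = (p i).1 := by
  rw [flat, if_pos (by simp [idxE])]
  have : (2 * i.val) / 2 = i.val := by omega
  simp only [idxE, this, Fin.eta]

lemma flat_idxO {n : ℕ} (p : Fin 5 → ZMod n × ZMod n) (i : Fin 5) :
    flat p (idxO i) = (p i).2 := by
  rw [flat, if_neg (by simp [idxO])]
  have : (2 * i.val + 1) / 2 = i.val := by omega
  simp only [idxO, this, Fin.eta]

lemma m5_eq (i : Fin 5) : 2 * (![2,2,2,2,2] : Fin 5 → ℕ) i = 4 := by fin_cases i <;> rfl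

lemma m5_nz (i : Fin 5) : NeZero (2 * (![2,2,2,2,2] : Fin 5 → ℕ) i) := ⟨by rw [m5_eq]; omega⟩

lemma val_lt4 (i : Fin 5) (j : ZMod (2 * (![2,2,2,2,2] : Fin 5 → ℕ) i)) : j.val < 4 := by
  haveI := m5_nz i
  have h1 := ZMod.val_lt j
  have h2 := m5_eq i
  omega

lemma val_succ (i : Fin 5) (j : ZMod (2 * (![2,2,2,2,2] : Fin 5 → ℕ) i)) :
    (j + 1).val = (j.val + 1) % 4 := by
  haveI := m5_nz i
  haveI : Fact (1 < 2 * (![2,2,2,2,2] : Fin 5 → ℕ) i) := ⟨by rw [m5_eq]; omega⟩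
  have h : ∀ X : ℕ, X % (2 * (![2,2,2,2,2] : Fin 5 → ℕ) i) = X % 4 := fun X => by
    rw [m5_eq i]
  rw [ZMod.val_add, ZMod.val_one]
  exact h _

lemma val_natc (i : Fin 5) (t : ℕ) :
    ((t : ZMod (2 * (![2,2,2,2,2] : Fin 5 → ℕ) i))).val = t % 4 := by
  haveI := m5_nz i
  have h : ∀ X : ℕ, X % (2 * (![2,2,2,2,2] : Fin 5 → ℕ) i) = X % 4 := fun X => by
    rw [m5_eq i]
  rw [ZMod.val_natCast]
  exact h _

-- ===== the factor builder =====

section Build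

variable {n : ℕ} [NeZero n]

def cycfun (w : Fin 5 → ZMod n × ZMod n) (z : Fin 2) (i : Fin 5)
    (j : ZMod (2 * (![2,2,2,2,2] : Fin 5 → ℕ) i)) : HOPVertex n :=
  if j.val % 4 = 0 then (ztf (flat w (idxE i)), 0)
  else if j.val % 4 = 1 then (ztf (flat w (idxE i)), 1)
  else if j.val % 4 = 2 then (ztf (flat w (idxO i)), z)
  else (ztf (flat w (idxO i)), z + 1)

variable (w : Fin 5 → ZMod n × ZMod n) (z : Fin 2) (i : Fin 5)
  (j : ZMod (2 * (![2,2,2,2,2] : Fin 5 → ℕ) i))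

lemma cycfun_eval0 (h : j.val % 4 = 0) : cycfun w z i j = (ztf (flat w (idxE i)), 0) := by
  rw [cycfun, if_pos h]

lemma cycfun_eval1 (h : j.val % 4 = 1) : cycfun w z i j = (ztf (flat w (idxE i)), 1) := by
  rw [cycfun, if_neg (by omega), if_pos h]

lemma cycfun_eval2 (h : j.val % 4 = 2) : cycfun w z i j = (ztf (flat w (idxO i)), z) := by
  rw [cycfun, if_neg (by omega), if_neg (by omega), if_pos h]

lemma cycfun_eval3 (h : j.val % 4 = 3) : cycfun w z i j = (ztf (flat w (idxO i)), z + 1) := by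
  rw [cycfun, if_neg (by omega), if_neg (by omega), if_neg (by omega)]

lemma cyc_fst : ∃ r : Fin 10, (cycfun w z i j).1 = ztf (flat w r) ∧
    r.val = 2 * i.val + j.val % 4 / 2 := by
  rcases (by omega : j.val % 4 = 0 ∨ j.val % 4 = 1 ∨ j.val % 4 = 2 ∨ j.val % 4 = 3) with
    h | h | h | h
  · exact ⟨idxE i, by rw [cycfun_eval0 w z i j h], by rw [h]; rfl⟩
  · exact ⟨idxE i, by rw [cycfun_eval1 w z i j h], by rw [h]; rfl⟩
  · exact ⟨idxO i, by rw [cycfun_eval2 w z i j h], by rw [h]; rfl⟩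
  · exact ⟨idxO i, by rw [cycfun_eval3 w z i j h], by rw [h]; rfl⟩

def cset : Finset (Fin n) :=
  Finset.univ \ Finset.image (fun r => ztf (flat w r)) Finset.univ

lemma cset_card (hw : Function.Injective (flat w)) : (cset w).card = n - 10 := by
  rw [cset, Finset.card_sdiff_of_subset (Finset.subset_univ _), Finset.card_univ,
    Finset.card_image_of_injective _ (fun a b hab => hw (ztf_inj hab))]
  simp

noncomputable def pfun (hw : Function.Injective (flat w)) (a : Fin (n - 10)) : Fin n :=
  (cset w).orderEmbOfFin (cset_card w hw) a

lemma pfun_inj (hw : Function.Injective (flat w)) : Function.Injective (pfun w hw) :=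
  fun a b hab => ((cset w).orderEmbOfFin (cset_card w hw)).injective hab

lemma pfun_ne (hw : Function.Injective (flat w)) (a : Fin (n - 10)) (r : Fin 10) :
    pfun w hw a ≠ ztf (flat w r) := by
  intro hcon
  have hmem : pfun w hw a ∈ cset w := Finset.orderEmbOfFin_mem _ _ _
  rw [cset, Finset.mem_sdiff] at hmem
  exact hmem.2 (Finset.mem_image.mpr ⟨r, Finset.mem_univ r, hcon.symm⟩)

noncomputable def mkFactor (hn : 10 ≤ n) (hw : Function.Injective (flat w)) :
    HOPFactor n (n - 10) 5 ![2, 2, 2, 2, 2] where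
  pair a := (pfun w hw a, 0)
  cyc := cycfun w z
  alt_even := by
    intro i j hj
    have h4 := val_lt4 i j
    have hs := val_succ i j
    rcases (by omega : j.val = 0 ∨ j.val = 2) with h | h
    · rw [cycfun_eval1 w z i (j + 1) (by omega), cycfun_eval0 w z i j (by omega)]
      rfl
    · rw [cycfun_eval3 w z i (j + 1) (by omega), cycfun_eval2 w z i j (by omega)]
      rfl
  alt_odd := by
    intro i j hj
    have h4 := val_lt4 i j
    have hs := val_succ i j
    have hne : ztf (flat w (idxE i)) ≠ ztf (flat w (idxO i)) := by
      intro hcon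
      have h1 := hw (ztf_inj hcon)
      have h2 := congrArg Fin.val h1
      simp only [idxE, idxO] at h2
      omega
    rcases (by omega : j.val = 1 ∨ j.val = 3) with h | h
    · rw [cycfun_eval1 w z i j (by omega), cycfun_eval2 w z i (j + 1) (by omega)]
      exact not_isIEdge_of_ne hne _ _
    · rw [cycfun_eval3 w z i j (by omega), cycfun_eval0 w z i (j + 1) (by omega)]
      exact not_isIEdge_of_ne hne.symm _ _
  spanning := by
    haveI inst : ∀ i : Fin 5, NeZero (2 * (![2,2,2,2,2] : Fin 5 → ℕ) i) := m5_nz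
    have key : ∀ (c1 : Fin (n - 10)) (c2 : Fin 2),
        (if c2 = 0 then ((pfun w hw c1, (0 : Fin 2)) : HOPVertex n)
          else HOPspouse (pfun w hw c1, 0)) = (pfun w hw c1, c2) := by
      intro c1 c2
      fin_cases c2 <;> rfl
    rw [Fintype.bijective_iff_injective_and_card]
    constructor
    · rintro (⟨a1, a2⟩ | ⟨i, j⟩) (⟨b1, b2⟩ | ⟨i', j'⟩) h <;>
        simp only [Sum.elim_inl, Sum.elim_inr] at h
      · rw [key, key] at h
        obtain ⟨h1, h2⟩ := Prod.mk.injEq .. |>.mp h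
        rw [pfun_inj w hw h1, h2]
      · exfalso
        rw [key] at h
        obtain ⟨r, hr, -⟩ := cyc_fst w z i' j'
        exact pfun_ne w hw a1 r ((congrArg Prod.fst h).trans hr)
      · exfalso
        rw [key] at h
        obtain ⟨r, hr, -⟩ := cyc_fst w z i j
        exact pfun_ne w hw b1 r ((congrArg Prod.fst h.symm).trans hr)
      · have h4 := val_lt4 i j
        have h4' := val_lt4 i' j'
        obtain ⟨r, hr, hrv⟩ := cyc_fst w z i j
        obtain ⟨r', hr', hrv'⟩ := cyc_fst w z i' j'
        have hfst : ztf (flat w r) = ztf (flat w r') := by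
          rw [← hr, ← hr', h]
        have hrr : r = r' := hw (ztf_inj hfst)
        have hvv : 2 * i.val + j.val % 4 / 2 = 2 * i'.val + j'.val % 4 / 2 := by
          rw [← hrv, ← hrv', hrr]
        have hii : i = i' := Fin.ext (by omega)
        subst hii
        rcases (by omega : j.val = j'.val ∨ (j.val = 0 ∧ j'.val = 1) ∨ (j.val = 1 ∧ j'.val = 0)
            ∨ (j.val = 2 ∧ j'.val = 3) ∨ (j.val = 3 ∧ j'.val = 2)) with
          h0 | ⟨ha, hb⟩ | ⟨ha, hb⟩ | ⟨ha, hb⟩ | ⟨ha, hb⟩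
        · exact congrArg Sum.inr (congrArg (Sigma.mk i) (ZMod.val_injective _ h0))
        · rw [cycfun_eval0 w z i j (by omega), cycfun_eval1 w z i j' (by omega)] at h
          have h2 : (0 : Fin 2) = 1 := congrArg Prod.snd h
          exact absurd h2 (by decide)
        · rw [cycfun_eval1 w z i j (by omega), cycfun_eval0 w z i j' (by omega)] at h
          have h2 : (1 : Fin 2) = 0 := congrArg Prod.snd h
          exact absurd h2 (by decide)
        · rw [cycfun_eval2 w z i j (by omega), cycfun_eval3 w z i j' (by omega)] at h
          have h2 : z = z + 1 := congrArg Prod.snd h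
          exact absurd h2 ((by decide : ∀ u : Fin 2, ¬ u = u + 1) z)
        · rw [cycfun_eval3 w z i j (by omega), cycfun_eval2 w z i j' (by omega)] at h
          have h2 : z + 1 = z := congrArg Prod.snd h
          exact absurd h2 ((by decide : ∀ u : Fin 2, ¬ u + 1 = u) z)
    · have hzc : ∀ i : Fin 5, Fintype.card (ZMod (2 * (![2,2,2,2,2] : Fin 5 → ℕ) i)) = 4 :=
        fun i => by rw [ZMod.card]; exact m5_eq i
      simp only [Fintype.card_sum, Fintype.card_prod, Fintype.card_fin, Fintype.card_sigma,
        hzc, Finset.sum_const, Finset.card_univ, smul_eq_mul]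
      omega


lemma mem_mkFactor_iff (hn : 10 ≤ n) (hw : Function.Injective (flat w))
    {A B : ZMod n} (hAB : A ≠ B) (x y : Fin 2) :
    s(((ztf A : Fin n), x), (ztf B, y)) ∈ (mkFactor w z hn hw).edges ↔
      ((∃ i, w i = (A, B) ∨ w i = (B, A)) ∧ z = x + y + 1) := by
  constructor
  · rintro (⟨a, ha⟩ | ⟨i, j, hj⟩)
    · exfalso
      rw [Sym2.eq_iff] at ha
      rcases ha with ⟨h1, h2⟩ | ⟨h1, h2⟩ <;>
        exact hAB (ztf_inj ((congrArg Prod.fst h1).trans (congrArg Prod.fst h2).symm))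
    · have hj' : s(((ztf A : Fin n), x), (ztf B, y)) =
          s(cycfun w z i j, cycfun w z i (j + 1)) := hj
      have h4 := val_lt4 i j
      have hs := val_succ i j
      rcases (by omega : j.val = 0 ∨ j.val = 1 ∨ j.val = 2 ∨ j.val = 3) with h | h | h | h
      · exfalso
        rw [cycfun_eval0 w z i j (by omega), cycfun_eval1 w z i (j + 1) (by omega),
          Sym2.eq_iff] at hj'
        rcases hj' with ⟨h1, h2⟩ | ⟨h1, h2⟩ <;>
          exact hAB (ztf_inj ((congrArg Prod.fst h1).trans (congrArg Prod.fst h2).symm))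
      · rw [cycfun_eval1 w z i j (by omega), cycfun_eval2 w z i (j + 1) (by omega),
          Sym2.eq_iff] at hj'
        rcases hj' with ⟨h1, h2⟩ | ⟨h1, h2⟩
        · have hA : A = (w i).1 := by
            have h' := ztf_inj (congrArg Prod.fst h1 : ztf A = ztf (flat w (idxE i)))
            rwa [flat_idxE] at h'
          have hB : B = (w i).2 := by
            have h' := ztf_inj (congrArg Prod.fst h2 : ztf B = ztf (flat w (idxO i)))
            rwa [flat_idxO] at h'
          have hx : x = 1 := congrArg Prod.snd h1
          have hy : y = z := congrArg Prod.snd h2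
          refine ⟨⟨i, Or.inl (Prod.ext hA.symm hB.symm)⟩, ?_⟩
          rw [hx, hy]
          exact (by decide : ∀ u : Fin 2, u = 1 + u + 1) z
        · have hA : A = (w i).2 := by
            have h' := ztf_inj (congrArg Prod.fst h1 : ztf A = ztf (flat w (idxO i)))
            rwa [flat_idxO] at h'
          have hB : B = (w i).1 := by
            have h' := ztf_inj (congrArg Prod.fst h2 : ztf B = ztf (flat w (idxE i)))
            rwa [flat_idxE] at h'
          have hx : x = z := congrArg Prod.snd h1
          have hy : y = 1 := congrArg Prod.snd h2
          refine ⟨⟨i, Or.inr (Prod.ext hB.symm hA.symm)⟩, ?_⟩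
          rw [hx, hy]
          exact (by decide : ∀ u : Fin 2, u = u + 1 + 1) z
      · exfalso
        rw [cycfun_eval2 w z i j (by omega), cycfun_eval3 w z i (j + 1) (by omega),
          Sym2.eq_iff] at hj'
        rcases hj' with ⟨h1, h2⟩ | ⟨h1, h2⟩ <;>
          exact hAB (ztf_inj ((congrArg Prod.fst h1).trans (congrArg Prod.fst h2).symm))
      · rw [cycfun_eval3 w z i j (by omega), cycfun_eval0 w z i (j + 1) (by omega),
          Sym2.eq_iff] at hj'
        rcases hj' with ⟨h1, h2⟩ | ⟨h1, h2⟩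
        · have hA : A = (w i).2 := by
            have h' := ztf_inj (congrArg Prod.fst h1 : ztf A = ztf (flat w (idxO i)))
            rwa [flat_idxO] at h'
          have hB : B = (w i).1 := by
            have h' := ztf_inj (congrArg Prod.fst h2 : ztf B = ztf (flat w (idxE i)))
            rwa [flat_idxE] at h'
          have hx : x = z + 1 := congrArg Prod.snd h1
          have hy : y = 0 := congrArg Prod.snd h2
          refine ⟨⟨i, Or.inr (Prod.ext hB.symm hA.symm)⟩, ?_⟩
          rw [hx, hy]
          exact (by decide : ∀ u : Fin 2, u = (u + 1) + 0 + 1) z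
        · have hA : A = (w i).1 := by
            have h' := ztf_inj (congrArg Prod.fst h1 : ztf A = ztf (flat w (idxE i)))
            rwa [flat_idxE] at h'
          have hB : B = (w i).2 := by
            have h' := ztf_inj (congrArg Prod.fst h2 : ztf B = ztf (flat w (idxO i)))
            rwa [flat_idxO] at h'
          have hx : x = 0 := congrArg Prod.snd h1
          have hy : y = z + 1 := congrArg Prod.snd h2
          refine ⟨⟨i, Or.inl (Prod.ext hA.symm hB.symm)⟩, ?_⟩
          rw [hx, hy]
          exact (by decide : ∀ u : Fin 2, u = 0 + (u + 1) + 1) z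
  · rintro ⟨⟨i, hi | hi⟩, hz⟩
    · have hA : ztf (flat w (idxE i)) = ztf A := by rw [flat_idxE, hi]
      have hB : ztf (flat w (idxO i)) = ztf B := by rw [flat_idxO, hi]
      have hv1 : (((1 : ℕ) : ZMod (2 * (![2,2,2,2,2] : Fin 5 → ℕ) i))).val = 1 := by
        rw [val_natc]
      have hv3 : (((3 : ℕ) : ZMod (2 * (![2,2,2,2,2] : Fin 5 → ℕ) i))).val = 3 := by
        rw [val_natc]
      fin_cases x
      · have hzy : z + 1 = y := by
          rw [hz]
          exact (by decide : ∀ u : Fin 2, (0 + u + 1) + 1 = u) y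
        refine Or.inr ⟨i, ((3 : ℕ) : ZMod (2 * (![2,2,2,2,2] : Fin 5 → ℕ) i)), ?_⟩
        show s(((ztf A : Fin n), (0 : Fin 2)), (ztf B, y)) = _
        rw [show (mkFactor w z hn hw).cyc = cycfun w z from rfl]
        rw [cycfun_eval3 w z i _ (by rw [hv3]),
          cycfun_eval0 w z i _ (by rw [val_succ, hv3])]
        rw [hA, hB, hzy]
        exact Sym2.eq_swap
      · have hzy : z = y := by
          rw [hz]
          exact (by decide : ∀ u : Fin 2, 1 + u + 1 = u) y
        refine Or.inr ⟨i, ((1 : ℕ) : ZMod (2 * (![2,2,2,2,2] : Fin 5 → ℕ) i)), ?_⟩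
        show s(((ztf A : Fin n), (1 : Fin 2)), (ztf B, y)) = _
        rw [show (mkFactor w z hn hw).cyc = cycfun w z from rfl]
        rw [cycfun_eval1 w z i _ (by rw [hv1]),
          cycfun_eval2 w z i _ (by rw [val_succ, hv1])]
        rw [hA, hB, hzy]
    · have hA : ztf (flat w (idxO i)) = ztf A := by rw [flat_idxO, hi]
      have hB : ztf (flat w (idxE i)) = ztf B := by rw [flat_idxE, hi]
      have hv1 : (((1 : ℕ) : ZMod (2 * (![2,2,2,2,2] : Fin 5 → ℕ) i))).val = 1 := by
        rw [val_natc]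
      have hv3 : (((3 : ℕ) : ZMod (2 * (![2,2,2,2,2] : Fin 5 → ℕ) i))).val = 3 := by
        rw [val_natc]
      fin_cases y
      · have hzx : z + 1 = x := by
          rw [hz]
          exact (by decide : ∀ u : Fin 2, (u + 0 + 1) + 1 = u) x
        refine Or.inr ⟨i, ((3 : ℕ) : ZMod (2 * (![2,2,2,2,2] : Fin 5 → ℕ) i)), ?_⟩
        show s(((ztf A : Fin n), x), (ztf B, (0 : Fin 2))) = _
        rw [show (mkFactor w z hn hw).cyc = cycfun w z from rfl]
        rw [cycfun_eval3 w z i _ (by rw [hv3]),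
          cycfun_eval0 w z i _ (by rw [val_succ, hv3])]
        rw [hA, hB, hzx]
      · have hzx : z = x := by
          rw [hz]
          exact (by decide : ∀ u : Fin 2, u + 1 + 1 = u) x
        refine Or.inr ⟨i, ((1 : ℕ) : ZMod (2 * (![2,2,2,2,2] : Fin 5 → ℕ) i)), ?_⟩
        show s(((ztf A : Fin n), x), (ztf B, (1 : Fin 2))) = _
        rw [show (mkFactor w z hn hw).cyc = cycfun w z from rfl]
        rw [cycfun_eval1 w z i _ (by rw [hv1]),
          cycfun_eval2 w z i _ (by rw [val_succ, hv1])]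
        rw [hA, hB, hzx]
        exact Sym2.eq_swap

end Build

theorem abstract_sol (n : ℕ) (hn : 10 ≤ n) (Q : Type) [Fintype Q]
    (D : Q → Fin 5 → ZMod n × ZMod n)
    (hP1 : ∀ q, Function.Injective (flat (D q)))
    (hP2 : ∀ A B : ZMod n, A ≠ B → ∃! q, ∃ i, D q i = (A, B) ∨ D q i = (B, A))
    (hcard : 10 * Fintype.card Q = n * (n - 1)) :
    HOPSolution n (n - 10) 5 ![2, 2, 2, 2, 2] := by
  haveI : NeZero n := ⟨by omega⟩
  refine ⟨n * (n - 1) / 5, ?_, ?_⟩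
  · have hsum : (∑ i, (![2,2,2,2,2] : Fin 5 → ℕ) i) = 10 := by decide
    have h2 : 2 * n * (n - 1) = 2 * (n * (n - 1)) := by ring
    rw [hsum, h2]
    set N := n * (n - 1) with hN
    omega
  · have hQ : Fintype.card (Fin 2 × Q) = n * (n - 1) / 5 := by
      rw [Fintype.card_prod, Fintype.card_fin]
      set N := n * (n - 1) with hN
      omega
    have E : Fin (n * (n - 1) / 5) ≃ Fin 2 × Q := (Fintype.equivFinOfCardEq hQ).symm
    refine ⟨fun k => mkFactor (D (E k).2) (E k).1 hn (hP1 _), ?_⟩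
    intro e hd hI
    induction e using Sym2.ind with
    | _ u v =>
      obtain ⟨uc, ux⟩ := u
      obtain ⟨vc, vx⟩ := v
      have hne : uc ≠ vc := by
        rintro rfl
        have hxy : ux ≠ vx := by
          rintro rfl
          exact hd (by simp)
        have hstep : vx = ux + 1 := (by decide : ∀ a b : Fin 2, a ≠ b → b = a + 1) ux vx hxy
        exact hI ⟨(uc, ux), by rw [hstep]; rfl⟩
      have hA : ztf ((uc.val : ZMod n)) = uc := Fin.ext (ZMod.val_cast_of_lt uc.isLt)
      have hB : ztf ((vc.val : ZMod n)) = vc := Fin.ext (ZMod.val_cast_of_lt vc.isLt)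
      have hABne : ((uc.val : ZMod n)) ≠ ((vc.val : ZMod n)) := by
        intro hcon
        exact hne (by rw [← hA, ← hB, hcon])
      obtain ⟨q₀, hq₀, huniq⟩ := hP2 _ _ hABne
      refine ⟨E.symm (ux + vx + 1, q₀), ?_, ?_⟩
      · have hEk : E (E.symm (ux + vx + 1, q₀)) = (ux + vx + 1, q₀) := E.apply_symm_apply _
        simp only [hEk]
        rw [← hA, ← hB]
        exact (mem_mkFactor_iff (D q₀) (ux + vx + 1) hn (hP1 q₀) hABne ux vx).mpr ⟨hq₀, rfl⟩
      · intro k hk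
        rw [← hA, ← hB] at hk
        have hmem := (mem_mkFactor_iff (D (E k).2) (E k).1 hn (hP1 _) hABne ux vx).mp hk
        have hq : (E k).2 = q₀ := huniq _ hmem.1
        have hEk : E k = (ux + vx + 1, q₀) := Prod.ext hmem.2 hq
        rw [← hEk, Equiv.symm_apply_apply]

theorem solA (n : ℕ) (hn : 10 ≤ n) (h20 : n % 20 = 1) :
    HOPSolution n (n - 10) 5 ![2, 2, 2, 2, 2] := by
  haveI : NeZero n := ⟨by omega⟩
  have hM10 : 10 * ((n - 1) / 10) = n - 1 := by omega
  set M := (n - 1) / 10 with hMdef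
  have hM5 : 2 * (5 * M) = n - 1 := by omega
  have hcop : Nat.Coprime 2 n := (Nat.prime_two.coprime_iff_not_dvd).mpr (by omega)
  have hu : IsUnit (2 : ZMod n) := by
    have h := (ZMod.isUnit_iff_coprime 2 n).mpr hcop
    simpa using h
  obtain ⟨u, hu2⟩ := hu
  have hvalc : ∀ c : ZMod n, ((c.val : ℕ) : ZMod n) = c := fun c => ZMod.natCast_rightInverse c
  have hcast_ne : ∀ s t : ℕ, 1 ≤ s → 1 ≤ t → s + t ≤ n - 1 → (s : ZMod n) ≠ -(t : ZMod n) := by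
    intro s t hs ht hst heq
    have h0 : ((s + t : ℕ) : ZMod n) = 0 := by push_cast; rw [heq]; ring
    rw [ZMod.natCast_eq_zero_iff] at h0
    have := Nat.le_of_dvd (by omega) h0
    omega
  set D : (ZMod n × Fin M) → Fin 5 → ZMod n × ZMod n :=
    fun q i => (q.1 + ((5 * q.2.val + i.val + 1 : ℕ) : ZMod n),
                q.1 - ((5 * q.2.val + i.val + 1 : ℕ) : ZMod n)) with hD
  apply abstract_sol n hn (ZMod n × Fin M) D
  · -- P1
    intro q r r' h
    have hr := r.isLt
    have hr' := r'.isLt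
    have hb := q.2.isLt
    have h5Mn : 5 * M < n := by omega
    simp only [flat, hD] at h
    have hle1 : 5 * q.2.val + r.val / 2 + 1 <= 5 * M := by omega
    have hle2 : 5 * q.2.val + r'.val / 2 + 1 <= 5 * M := by omega
    by_cases h1 : r.val % 2 = 0 <;> by_cases h2 : r'.val % 2 = 0
    · rw [if_pos h1, if_pos h2] at h
      have h4 := natCast_inj_of_lt (by omega) (by omega) (add_left_cancel h)
      exact Fin.ext (by omega)
    · rw [if_pos h1, if_neg h2, sub_eq_add_neg] at h
      exact absurd (add_left_cancel h) (hcast_ne _ _ (by omega) (by omega) (by omega))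
    · rw [if_neg h1, if_pos h2, sub_eq_add_neg] at h
      exact absurd (add_left_cancel h).symm (hcast_ne _ _ (by omega) (by omega) (by omega))
    · rw [if_neg h1, if_neg h2, sub_eq_add_neg, sub_eq_add_neg] at h
      have h4 := natCast_inj_of_lt (by omega) (by omega) (neg_injective (add_left_cancel h))
      exact Fin.ext (by omega)
  · -- P2
    intro A B hAB
    have hcancel2 : forall a b : ZMod n, 2 * a = 2 * b -> a = b := by
      intro a b hab
      have h1 : (u⁻¹ : (ZMod n)ˣ) * (2 * a) = (u⁻¹ : (ZMod n)ˣ) * (2 * b) := by rw [hab]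
      rwa [← mul_assoc, ← mul_assoc, ← hu2, Units.inv_mul, one_mul, one_mul] at h1
    set v : ZMod n := (u⁻¹ : (ZMod n)ˣ) * (A + B) with hv
    have h2v : 2 * v = A + B := by
      rw [hv, ← mul_assoc, ← hu2, Units.mul_inv, one_mul]
    set c : ZMod n := A - v with hc
    have hvc1 : v + c = A := by rw [hc]; ring
    have hvc2 : v - c = B := by
      have h3 : v - c = 2 * v - A := by rw [hc]; ring
      rw [h3, h2v]; ring
    have hc0 : c ≠ 0 := by
      intro h0
      apply hAB
      rw [← hvc1, ← hvc2, h0, add_zero, sub_zero]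
    have hcv1 : 1 <= c.val := by
      have := (ZMod.val_eq_zero c).not.mpr hc0
      omega
    have hcvn : c.val <= n - 1 := by have := ZMod.val_lt c; omega
    have hnegv : (-c).val = n - c.val := by rw [ZMod.neg_val, if_neg hc0]
    rcases le_or_gt c.val (5 * M) with hle | hgt
    · -- use (v, (c.val-1)/5), orientation (A, B)
      refine ⟨(v, ⟨(c.val - 1) / 5, by omega⟩), ⟨⟨(c.val - 1) % 5, by omega⟩, Or.inl ?_⟩, ?_⟩
      · show (v + _, v - _) = (A, B)
        have hofft : 5 * ((c.val - 1) / 5) + (c.val - 1) % 5 + 1 = c.val := by omega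
        simp only [hofft, hvalc c]
        exact Prod.ext hvc1 hvc2
      · rintro ⟨v', b'⟩ ⟨i', hi' | hi'⟩ <;>
          simp only [hD, Prod.mk.injEq] at hi' <;> obtain ⟨hx1, hx2⟩ := hi'
        · have h2v' : 2 * v' = A + B := by rw [← hx1, ← hx2]; ring
          have hvv : v' = v := hcancel2 _ _ (by rw [h2v', h2v])
          rw [hvv, ← hvc1] at hx1
          have hco : ((5 * b'.val + i'.val + 1 : ℕ) : ZMod n) = ((c.val : ℕ) : ZMod n) :=
            (add_left_cancel hx1).trans (hvalc c).symm
          have hb' := b'.isLt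
          have hi5 := i'.isLt
          have ho' := natCast_inj_of_lt (by omega) (by omega) hco
          have hbval : b'.val = (c.val - 1) / 5 := by omega
          exact Prod.ext hvv (Fin.ext hbval)
        · exfalso
          have h2v' : 2 * v' = A + B := by rw [← hx1, ← hx2]; ring
          have hvv : v' = v := hcancel2 _ _ (by rw [h2v', h2v])
          rw [hvv, ← hvc2, sub_eq_add_neg, ← hvalc c] at hx1
          have hb' := b'.isLt
          have hi5 := i'.isLt
          exact hcast_ne _ _ (by omega) (by omega) (by omega) (add_left_cancel hx1)
    · -- use (v, ((n - c.val)-1)/5), orientation (B, A)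
      have htle : n - c.val <= 5 * M := by omega
      have htge : 1 <= n - c.val := by omega
      have hcastt : ((n - c.val : ℕ) : ZMod n) = -c := by rw [← hnegv, hvalc (-c)]
      refine ⟨(v, ⟨(n - c.val - 1) / 5, by omega⟩), ⟨⟨(n - c.val - 1) % 5, by omega⟩, Or.inr ?_⟩, ?_⟩
      · show (v + _, v - _) = (B, A)
        have hofft : 5 * ((n - c.val - 1) / 5) + (n - c.val - 1) % 5 + 1 = n - c.val := by omega
        simp only [hofft, hcastt]
        refine Prod.ext ?_ ?_
        · rw [← hvc2]; ring
        · rw [← hvc1]; ring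
      · rintro ⟨v', b'⟩ ⟨i', hi' | hi'⟩ <;>
          simp only [hD, Prod.mk.injEq] at hi' <;> obtain ⟨hx1, hx2⟩ := hi'
        · exfalso
          have h2v' : 2 * v' = A + B := by rw [← hx1, ← hx2]; ring
          have hvv : v' = v := hcancel2 _ _ (by rw [h2v', h2v])
          rw [hvv, ← hvc1] at hx1
          have hco := (add_left_cancel hx1).trans (hvalc c).symm
          have hb' := b'.isLt
          have hi5 := i'.isLt
          have ho' := natCast_inj_of_lt (by omega) (by omega) hco
          omega
        · have h2v' : 2 * v' = A + B := by rw [← hx2, ← hx1]; ring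
          have hvv : v' = v := hcancel2 _ _ (by rw [h2v', h2v])
          rw [hvv, ← hvc2, sub_eq_add_neg, ← hcastt] at hx1
          have hb' := b'.isLt
          have hi5 := i'.isLt
          have ho' := natCast_inj_of_lt (by omega) (by omega) (add_left_cancel hx1)
          have hbval : b'.val = (n - c.val - 1) / 5 := by omega
          exact Prod.ext hvv (Fin.ext hbval)
  · rw [Fintype.card_prod, Fintype.card_fin, ZMod.card]
    calc 10 * (n * M) = n * (10 * M) := by ring
    _ = n * (n - 1) := by rw [hM10]

lemma natCast_ne_neg {n : ℕ} [NeZero n] (s t : ℕ) (hs : 1 ≤ s) (ht : 1 ≤ t)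
    (hst : s + t ≤ n - 1) : (s : ZMod n) ≠ -(t : ZMod n) := by
  intro heq
  have h0 : ((s + t : ℕ) : ZMod n) = 0 := by push_cast; rw [heq]; ring
  rw [ZMod.natCast_eq_zero_iff] at h0
  have := Nat.le_of_dvd (by omega) h0
  omega

lemma keyB1 {n k H d c : ℕ} (hk5 : 5 * k = n) (hk : 5 ≤ k) (hH : 2 * H = n - 1)
    (hd4 : d + 1 ≤ 4) (hc : c < k) {a b a' b' : ℕ}
    (ha : a < 5) (hb : b < 2) (ha' : a' < 5) (hb' : b' < 2)
    (h : c + a * k + b * (d + 1) = c + a' * k + b' * (d + 1) ∨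
         c + a * k + b * (d + 1) = c + a' * k + b' * (d + 1) + n ∨
         c + a' * k + b' * (d + 1) = c + a * k + b * (d + 1) + n) :
    a = a' ∧ b = b' := by
  interval_cases a <;> interval_cases a' <;> interval_cases b <;> interval_cases b' <;> omega

lemma keyB2 {n k H d c : ℕ} (hk5 : 5 * k = n) (hk : 5 ≤ k) (hH : 2 * H = n - 1)
    (hd4 : ¬ d + 1 ≤ 4) (hd : d < H) (hc : c < k) {a b a' b' : ℕ}
    (ha : a < 5) (hb : b < 2) (ha' : a' < 5) (hb' : b' < 2)
    (h : 5 * c + a + b * (d + 1) = 5 * c + a' + b' * (d + 1) ∨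
         5 * c + a + b * (d + 1) = 5 * c + a' + b' * (d + 1) + n ∨
         5 * c + a' + b' * (d + 1) = 5 * c + a + b * (d + 1) + n) :
    a = a' ∧ b = b' := by
  interval_cases b <;> interval_cases b' <;> omega

theorem solB (n : ℕ) (hn : 10 ≤ n) (h20 : n % 20 = 5) :
    HOPSolution n (n - 10) 5 ![2, 2, 2, 2, 2] := by
  haveI : NeZero n := ⟨by omega⟩
  have hn25 : 25 ≤ n := by omega
  have hk5 : 5 * (n / 5) = n := by omega
  set k := n / 5 with hkdef
  have hk5' : 5 ≤ k := by omega
  have hkpos : 0 < k := by omega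
  have hH2 : 2 * ((n - 1) / 2) = n - 1 := by omega
  set H := (n - 1) / 2 with hHdef
  have hvalc : ∀ c : ZMod n, ((c.val : ℕ) : ZMod n) = c := fun c => ZMod.natCast_rightInverse c
  set D : (Fin H × Fin k) → Fin 5 → ZMod n × ZMod n := fun q i =>
    (((if q.1.val + 1 ≤ 4 then q.2.val + i.val * k else 5 * q.2.val + i.val : ℕ) : ZMod n),
     ((if q.1.val + 1 ≤ 4 then q.2.val + i.val * k else 5 * q.2.val + i.val : ℕ) : ZMod n)
       + ((q.1.val + 1 : ℕ) : ZMod n)) with hD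
  have hstb : ∀ (d : Fin H) (c : Fin k) (i : ℕ), i < 5 →
      (if d.val + 1 ≤ 4 then c.val + i * k else 5 * c.val + i) ≤ n - 1 := by
    intro d c i hi
    have h1 : i * k ≤ 4 * k := Nat.mul_le_mul_right k (by omega)
    have hc := c.isLt
    split_ifs <;> omega
  have main : ∀ A B : ZMod n, A ≠ B → (B - A).val ≤ H →
      ∃! q, ∃ i, D q i = (A, B) ∨ D q i = (B, A) := by
    intro A B hAB hTle
    have hδ0 : B - A ≠ 0 := sub_ne_zero.mpr hAB.symm
    have hT1 : 1 ≤ (B - A).val := by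
      have := (ZMod.val_eq_zero (B - A)).not.mpr hδ0
      omega
    have hAval : A.val < n := ZMod.val_lt A
    have hdlt : (B - A).val - 1 < H := by omega
    have hd1 : (B - A).val - 1 + 1 = (B - A).val := by omega
    have hcastd : (((B - A).val - 1 + 1 : ℕ) : ZMod n) = B - A := by rw [hd1, hvalc]
    by_cases ht4 : (B - A).val ≤ 4
    · -- small difference: decomposition A.val = (A.val % k) + (A.val / k) * k
      refine ⟨(⟨(B - A).val - 1, hdlt⟩, ⟨A.val % k, Nat.mod_lt _ hkpos⟩),
        ⟨⟨A.val / k, Nat.div_lt_of_lt_mul (by omega)⟩, Or.inl ?_⟩, ?_⟩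
      · refine Prod.ext ?_ ?_
        · show ((if _ then _ else _ : ℕ) : ZMod n) = A
          rw [if_pos (by simp only []; omega)]
          show (((A.val % k + A.val / k * k : ℕ)) : ZMod n) = A
          rw [Nat.mod_add_div']
          exact hvalc A
        · show ((if _ then _ else _ : ℕ) : ZMod n) + _ = B
          rw [if_pos (by simp only []; omega)]
          show (((A.val % k + A.val / k * k : ℕ)) : ZMod n) + (((B - A).val - 1 + 1 : ℕ) : ZMod n) = B
          rw [Nat.mod_add_div', hvalc A, hcastd]
          ring
      · rintro ⟨d', c'⟩ ⟨i', hi' | hi'⟩ <;>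
          simp only [hD, Prod.mk.injEq] at hi' <;> obtain ⟨hx1, hx2⟩ := hi'
        · rw [hx1] at hx2
          have hδ' : ((d'.val + 1 : ℕ) : ZMod n) = B - A := by rw [← hx2]; ring
          have hd'H := d'.isLt
          have hdeq : d'.val + 1 = (B - A).val :=
            natCast_inj_of_lt (by omega) (by omega) (hδ'.trans (hvalc (B - A)).symm)
          have hsval : (if d'.val + 1 ≤ 4 then c'.val + i'.val * k else 5 * c'.val + i'.val)
              = A.val := by
            refine natCast_inj_of_lt (by have := hstb d' c' i'.val (i'.isLt); omega) hAval ?_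
            rw [hx1, hvalc]
          rw [if_pos (by omega)] at hsval
          have hmod : (c'.val + i'.val * k) % k = c'.val % k := Nat.add_mul_mod_self_right ..
          have hmod2 : c'.val % k = c'.val := Nat.mod_eq_of_lt c'.isLt
          have hcval : c'.val = A.val % k := by
            have : A.val % k = (c'.val + i'.val * k) % k := by rw [hsval]
            omega
          have hde : d'.val = (B - A).val - 1 := by omega
          exact Prod.ext (Fin.ext hde) (Fin.ext hcval)
        · exfalso
          rw [hx1] at hx2
          have hδ' : ((d'.val + 1 : ℕ) : ZMod n) = A - B := by rw [← hx2]; ring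
          have hneg : ((d'.val + 1 : ℕ) : ZMod n) = -(((B - A).val : ℕ) : ZMod n) := by
            rw [hδ', hvalc]
            ring
          have hd'H := d'.isLt
          exact natCast_ne_neg (d'.val + 1) (B - A).val (by omega) (by omega) (by omega) hneg
    · -- large difference: decomposition A.val = 5 * (A.val / 5) + A.val % 5
      refine ⟨(⟨(B - A).val - 1, hdlt⟩, ⟨A.val / 5, by omega⟩),
        ⟨⟨A.val % 5, by omega⟩, Or.inl ?_⟩, ?_⟩
      · refine Prod.ext ?_ ?_
        · show ((if _ then _ else _ : ℕ) : ZMod n) = A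
          rw [if_neg (by simp only []; omega)]
          show (((5 * (A.val / 5) + A.val % 5 : ℕ)) : ZMod n) = A
          rw [Nat.div_add_mod]
          exact hvalc A
        · show ((if _ then _ else _ : ℕ) : ZMod n) + _ = B
          rw [if_neg (by simp only []; omega)]
          show (((5 * (A.val / 5) + A.val % 5 : ℕ)) : ZMod n) + (((B - A).val - 1 + 1 : ℕ) : ZMod n) = B
          rw [Nat.div_add_mod, hvalc A, hcastd]
          ring
      · rintro ⟨d', c'⟩ ⟨i', hi' | hi'⟩ <;>
          simp only [hD, Prod.mk.injEq] at hi' <;> obtain ⟨hx1, hx2⟩ := hi'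
        · rw [hx1] at hx2
          have hδ' : ((d'.val + 1 : ℕ) : ZMod n) = B - A := by rw [← hx2]; ring
          have hd'H := d'.isLt
          have hdeq : d'.val + 1 = (B - A).val :=
            natCast_inj_of_lt (by omega) (by omega) (hδ'.trans (hvalc (B - A)).symm)
          have hsval : (if d'.val + 1 ≤ 4 then c'.val + i'.val * k else 5 * c'.val + i'.val)
              = A.val := by
            refine natCast_inj_of_lt (by have := hstb d' c' i'.val (i'.isLt); omega) hAval ?_
            rw [hx1, hvalc]
          rw [if_neg (by omega)] at hsval
          have hi5 := i'.isLt
          have hcval : c'.val = A.val / 5 := by omega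
          have hde : d'.val = (B - A).val - 1 := by omega
          exact Prod.ext (Fin.ext hde) (Fin.ext hcval)
        · exfalso
          rw [hx1] at hx2
          have hδ' : ((d'.val + 1 : ℕ) : ZMod n) = A - B := by rw [← hx2]; ring
          have hneg : ((d'.val + 1 : ℕ) : ZMod n) = -(((B - A).val : ℕ) : ZMod n) := by
            rw [hδ', hvalc]
            ring
          have hd'H := d'.isLt
          exact natCast_ne_neg (d'.val + 1) (B - A).val (by omega) (by omega) (by omega) hneg
  apply abstract_sol n hn (Fin H × Fin k) D
  · -- P1
    intro q r r' h
    have hflat : ∀ (r : Fin 10), flat (D q) r =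
        (((if q.1.val + 1 ≤ 4 then q.2.val + (r.val / 2) * k else 5 * q.2.val + r.val / 2)
          + (r.val % 2) * (q.1.val + 1) : ℕ) : ZMod n) := by
      intro r
      simp only [flat, hD]
      by_cases h1 : r.val % 2 = 0
      · rw [if_pos h1, h1]
        norm_num
      · rw [if_neg h1, (by omega : r.val % 2 = 1)]
        push_cast
        ring
    rw [hflat, hflat] at h
    have hbound : ∀ (r : Fin 10),
        (if q.1.val + 1 ≤ 4 then q.2.val + (r.val / 2) * k else 5 * q.2.val + r.val / 2)
          + (r.val % 2) * (q.1.val + 1) < 2 * n := by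
      intro r
      have h1 := hstb q.1 q.2 (r.val / 2) (by have := r.isLt; omega)
      have h2 : (r.val % 2) * (q.1.val + 1) ≤ 1 * (q.1.val + 1) :=
        Nat.mul_le_mul_right _ (by omega)
      have h3 := q.1.isLt
      omega
    have hcase := natCast_cases (by omega) (hbound r) (hbound r') h
    have hr := r.isLt
    have hr' := r'.isLt
    by_cases h4 : q.1.val + 1 ≤ 4
    · simp only [if_pos h4] at hcase
      have := keyB1 hk5 hk5' hH2 h4 q.2.isLt
        (by omega : r.val / 2 < 5) (by omega : r.val % 2 < 2)
        (by omega : r'.val / 2 < 5) (by omega : r'.val % 2 < 2) hcase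
      exact Fin.ext (by omega)
    · simp only [if_neg h4] at hcase
      have := keyB2 hk5 hk5' hH2 h4 q.1.isLt q.2.isLt
        (by omega : r.val / 2 < 5) (by omega : r.val % 2 < 2)
        (by omega : r'.val / 2 < 5) (by omega : r'.val % 2 < 2) hcase
      exact Fin.ext (by omega)
  · -- P2
    intro A B hAB
    rcases le_or_gt (B - A).val H with hc | hc
    · exact main A B hAB hc
    · have hBA0 : B - A ≠ 0 := sub_ne_zero.mpr hAB.symm
      have hval : (A - B).val = n - (B - A).val := by
        rw [show A - B = -(B - A) by ring, ZMod.neg_val, if_neg hBA0]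
      have hBAlt := ZMod.val_lt (B - A)
      have hc' : (A - B).val ≤ H := by omega
      obtain ⟨q₀, hq₀, hu⟩ := main B A hAB.symm hc'
      refine ⟨q₀, ?_, ?_⟩
      · obtain ⟨i, hi | hi⟩ := hq₀
        exacts [⟨i, Or.inr hi⟩, ⟨i, Or.inl hi⟩]
      · rintro y ⟨i, hi | hi⟩
        exacts [hu y ⟨i, Or.inr hi⟩, hu y ⟨i, Or.inl hi⟩]
  · rw [Fintype.card_prod, Fintype.card_fin, Fintype.card_fin]
    calc 10 * (H * k) = (5 * k) * (2 * H) := by ring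
    _ = n * (n - 1) := by rw [hk5, hH2]

/-- Lemma 6.8(i): for `n ≥ 10` with `n ≡ 1` or `5 (mod 20)` and `s = n - 10`,
`HOP(2^⟨s⟩, 4, 4, 4, 4, 4)` has a solution. -/
theorem hop_C2_five_times (n s : ℕ) (hn10 : 10 ≤ n)
    (hcong : n % 20 = 1 ∨ n % 20 = 5) (hs : s = n - 10) :
    HOPSolution n s 5 ![2, 2, 2, 2, 2] := by
  subst hs
  rcases hcong with h | h
  · exact solA n hn10 h
  · exact solB n hn10 h
end
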